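/- arXiv:2605.00463 — 10 statements merged into one kernel-verified Lean document; each statement's English description precedes it below -/
import Mathlib

section
/- Let k be a field, R a commutative graded k-algebra with grading 𝒜 : ℕ → Submodule k R, and M an R-module equipped with a ℤ-grading ℳ : ℤ → Submodule k M (M is the internal direct sum of the ℳ n, and 𝒜 i • ℳ j ⊆ ℳ (i+j)) such that ℳ n = 0 for all sufficiently small n and each ℳ n is finite-dimensional over k. Let h ∈ ℕ and let x ∈ 𝒜 h be a non-zero-divisor on M (x • m = 0 implies m = 0). Then for every n ∈ ℤ, the image of ℳ n under the k-linear quotient map M → M/(x•M) has k-dimension equal to dim_k(ℳ n) − dim_k(ℳ (n−h)). (This is the coefficient-wise form of the identity P_{M/xM}(t) = (1 − t^h)·P_M(t) between Poincaré series.) -/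
/-- let `R` be a graded algebra over a field `k`, and `M` an `R`-module
with a compatible `ℤ`-grading `ℳ` by finite-dimensional `k`-subspaces vanishing in
sufficiently small degrees.  If `x ∈ 𝒜 h` is a non-zero-divisor on `M`, then for all
`n : ℤ` the image of `ℳ n` in `M/xM` has dimension `dim_k (ℳ n) - dim_k (ℳ (n - h))`.
This is the coefficient-wise form of `P_{M/xM}(t) = (1 - tʰ) P_M(t)`. -/
theorem poincare_quotient_regular {k R M : Type*} [Field k] [CommRing R] [Algebra k R]
    [AddCommGroup M] [Module R M] [Module k M] [IsScalarTower k R M]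
    (𝒜 : ℕ → Submodule k R) [GradedAlgebra 𝒜]
    (ℳ : ℤ → Submodule k M)
    (hdecomp : DirectSum.IsInternal ℳ)
    (hcompat : ∀ (i : ℕ) (j : ℤ), ∀ r ∈ 𝒜 i, ∀ m ∈ ℳ j, r • m ∈ ℳ ((i : ℤ) + j))
    (hbdd : ∃ n₀ : ℤ, ∀ n < n₀, ℳ n = ⊥)
    (hfin : ∀ n : ℤ, FiniteDimensional k (ℳ n))
    (h : ℕ) (x : R) (hx : x ∈ 𝒜 h)
    (hreg : ∀ m : M, x • m = 0 → m = 0) :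
    ∀ n : ℤ,
      (Module.finrank k
          ((ℳ n).map
            (Submodule.mkQ (LinearMap.range ((LinearMap.lsmul R M x).restrictScalars k)))) : ℤ) =
        (Module.finrank k (ℳ n) : ℤ) - (Module.finrank k (ℳ (n - (h : ℤ))) : ℤ) := by
  classical
  intro n
  set f : M →ₗ[k] M := (LinearMap.lsmul R M x).restrictScalars k with hfdef
  have hfapp : ∀ m : M, f m = x • m := fun m => rfl
  have hfinj : Function.Injective f := by
    intro a b hab
    have : x • (a - b) = 0 := by
      rw [smul_sub, sub_eq_zero]; simpa [hfapp] using hab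
    exact sub_eq_zero.mp (hreg _ this)
  set X : Submodule k M := LinearMap.range f with hXdef
  -- key identity
  have hkey : X ⊓ ℳ n = (ℳ (n - (h : ℤ))).map f := by
    apply le_antisymm
    · rintro m hm
      obtain ⟨hm1, hm2⟩ := hm
      obtain ⟨m', rfl⟩ := hm1
      -- decompose m'
      have hm'top : m' ∈ iSup ℳ := by
        rw [hdecomp.submodule_iSup_eq_top]; trivial
      obtain ⟨c, hc, hcsum⟩ := (Submodule.mem_iSup_iff_exists_finsupp ℳ m').mp hm'top
      set m₀ : M := c (n - (h : ℤ)) with hm₀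
      have hm₀mem : m₀ ∈ ℳ (n - (h : ℤ)) := hc _
      have hxm₀ : x • m₀ ∈ ℳ n := by
        have := hcompat h (n - (h : ℤ)) x hx m₀ hm₀mem
        simpa using this
      set s : Finset ℤ := insert (n - (h : ℤ)) c.support with hs
      have hsum : m' = ∑ j ∈ s, c j := by
        have hsum0 : (c.sum fun _i xi => xi) = ∑ j ∈ c.support, c j := rfl
        rw [← hcsum, hsum0]
        refine Finset.sum_subset (Finset.subset_insert _ _) ?_
        intro i _ hi
        exact Finsupp.notMem_support_iff.mp hi
      have hdiff : m' - m₀ = ∑ j ∈ s.erase (n - (h : ℤ)), c j := by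
        rw [Finset.sum_erase_eq_sub (Finset.mem_insert_self _ _), ← hsum]
      have hw : x • m' - x • m₀ ∈ ⨆ (j) (_ : j ≠ n), ℳ j := by
        rw [← smul_sub, hdiff, Finset.smul_sum]
        apply Submodule.sum_mem
        intro j hj
        have hjne : j ≠ n - (h : ℤ) := (Finset.mem_erase.mp hj).1
        have hmem : x • c j ∈ ℳ ((h : ℤ) + j) := hcompat h j x hx _ (hc j)
        have hne : (h : ℤ) + j ≠ n := by omega
        exact Submodule.mem_iSup_of_mem _ (Submodule.mem_iSup_of_mem hne hmem)
      have hw2 : x • m' - x • m₀ ∈ ℳ n := Submodule.sub_mem _ hm2 hxm₀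
      have hzero : x • m' - x • m₀ = 0 :=
        Submodule.disjoint_def.mp (iSupIndep_def.mp hdecomp.submodule_iSupIndep n) _ hw2 hw
      exact ⟨m₀, hm₀mem, by rw [hfapp]; exact (sub_eq_zero.mp hzero).symm⟩
    · rintro m ⟨m', hm', rfl⟩
      refine ⟨⟨m', rfl⟩, ?_⟩
      have := hcompat h (n - (h : ℤ)) x hx m' hm'
      simpa [hfapp] using this
  -- rank computation
  haveI := hfin n
  haveI := hfin (n - (h : ℤ))
  set g : ℳ n →ₗ[k] M ⧸ X := X.mkQ ∘ₗ (ℳ n).subtype with hg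
  have hrange : LinearMap.range g = (ℳ n).map X.mkQ := by
    rw [hg, LinearMap.range_comp, Submodule.range_subtype]
  have hker : LinearMap.ker g = Submodule.comap (ℳ n).subtype X := by
    rw [hg, LinearMap.ker_comp, Submodule.ker_mkQ]
  have hcomap : Submodule.comap (ℳ n).subtype X
      = Submodule.comap (ℳ n).subtype (X ⊓ ℳ n) := by
    rw [Submodule.comap_inf, Submodule.comap_subtype_self, inf_top_eq]
  have e1 : Module.finrank k (LinearMap.ker g) = Module.finrank k (X ⊓ ℳ n : Submodule k M) := by
    rw [hker, hcomap]
    exact LinearEquiv.finrank_eq (Submodule.comapSubtypeEquivOfLe inf_le_right)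
  have e2 : Module.finrank k (X ⊓ ℳ n : Submodule k M)
      = Module.finrank k (ℳ (n - (h : ℤ))) := by
    rw [hkey]
    exact (LinearEquiv.finrank_eq (Submodule.equivMapOfInjective f hfinj _)).symm
  have rn := LinearMap.finrank_range_add_finrank_ker g
  rw [hrange] at rn
  rw [e2] at e1
  push_cast
  omega
end

section
/- Let R be a commutative ring with a ℤ-grading 𝒜 : ℤ → AddSubgroup R (R is the internal direct sum of the 𝒜 n and 𝒜 i * 𝒜 j ⊆ 𝒜 (i+j)). Suppose every non-zero homogeneous element of R is invertible, and that there exists a non-zero homogeneous element of non-zero degree. Then the degree-zero part 𝒜 0 is a field (a subring in which every non-zero element is invertible with inverse in 𝒜 0), and there exist an integer n > 0 and a unit T of R with T ∈ 𝒜 n such that: for every m ∈ ℤ, if 𝒜 m ≠ 0 then n divides m, and for every k ∈ ℤ, 𝒜 (k·n) = { a · T^k | a ∈ 𝒜 0 } (where T^k is the k-th power of the unit T, allowing negative k). In other words, R = R₀[T, T^{-1}] as a graded ring. -/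
open DirectSum

private lemma inv_mem_neg_aux {R : Type*} [CommRing R]
    (𝒜 : ℤ → AddSubgroup R) [GradedRing 𝒜]
    (u : Rˣ) {n : ℤ} (hu : (u : R) ∈ 𝒜 n) : ((u⁻¹ : Rˣ) : R) ∈ 𝒜 (-n) := by
  classical
  set y : R := ((u⁻¹ : Rˣ) : R) with hy
  have hcomp : ∀ m : ℤ, m ≠ -n → (DirectSum.decompose 𝒜 y m : R) = 0 := by
    intro m hm
    have h1 : (DirectSum.decompose 𝒜 ((u : R) * y) (n + m) : R)
        = (u : R) * (DirectSum.decompose 𝒜 y m : R) :=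
      DirectSum.coe_decompose_mul_add_of_left_mem 𝒜 hu
    have h2 : (u : R) * y = 1 := u.mul_inv
    have h3 : (DirectSum.decompose 𝒜 (1 : R) (n + m) : R) = 0 := by
      refine DirectSum.decompose_of_mem_ne 𝒜 (SetLike.one_mem_graded 𝒜) ?_
      omega
    rw [h2, h3] at h1
    exact (Units.mul_right_eq_zero u).mp h1.symm
  have hsum : y = ∑ i ∈ (DirectSum.decompose 𝒜 y).support,
      (DirectSum.decompose 𝒜 y i : R) := (DirectSum.sum_support_decompose 𝒜 y).symm
  have : y = (DirectSum.decompose 𝒜 y (-n) : R) := by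
    conv_lhs => rw [hsum]
    refine Finset.sum_eq_single (-n) (fun b _ hb => hcomp b hb) (fun h => ?_)
    rw [DFinsupp.notMem_support_iff.mp h, ZeroMemClass.coe_zero]
  rw [this]
  exact SetLike.coe_mem _

private lemma zpow_mem_aux {R : Type*} [CommRing R]
    (𝒜 : ℤ → AddSubgroup R) [GradedRing 𝒜]
    (T : Rˣ) {n : ℤ} (hT : (T : R) ∈ 𝒜 n) : ∀ K : ℤ, ((T ^ K : Rˣ) : R) ∈ 𝒜 (K * n) := by
  have hnat : ∀ k : ℕ, ((T ^ (k : ℤ) : Rˣ) : R) ∈ 𝒜 ((k : ℤ) * n) := by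
    intro k
    induction k with
    | zero => simpa using SetLike.one_mem_graded 𝒜
    | succ k ih =>
      have h1 : ((T ^ ((k : ℤ) + 1) : Rˣ) : R) = ((T ^ (k : ℤ) : Rˣ) : R) * (T : R) := by
        rw [zpow_add, zpow_one, Units.val_mul]
      push_cast
      rw [h1]
      have := SetLike.mul_mem_graded ih hT
      rwa [show (k : ℤ) * n + n = ((k : ℤ) + 1) * n by ring] at this
  intro K
  rcases le_or_gt 0 K with hK | hK
  · obtain ⟨k, rfl⟩ := Int.eq_ofNat_of_zero_le hK
    exact hnat k
  · obtain ⟨k, rfl⟩ : ∃ k : ℕ, K = -(k : ℤ) := ⟨K.natAbs, by omega⟩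
    have h1 : (T ^ (-(k : ℤ)) : Rˣ) = (T ^ (k : ℤ))⁻¹ := by rw [zpow_neg]
    rw [h1]
    have := inv_mem_neg_aux 𝒜 (T ^ (k : ℤ)) (hnat k)
    rwa [show -((k : ℤ) * n) = -(k : ℤ) * n by ring] at this

/-- let `R` be a `ℤ`-graded commutative ring in which every non-zero
homogeneous element is invertible, and which has a non-zero homogeneous element of
non-zero degree.  Then the degree-zero part `𝒜 0` is a field, and there are an integer
`n > 0` and a unit `T ∈ 𝒜 n` such that every non-trivial graded piece sits in a degree
divisible by `n`, and `𝒜 (K·n) = (𝒜 0) · T^K` for all `K : ℤ`; i.e.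
`R = R₀[T, T⁻¹]` as a graded ring. -/
theorem graded_field_eq_laurent {R : Type*} [CommRing R]
    (𝒜 : ℤ → AddSubgroup R) [GradedRing 𝒜]
    (hinv : ∀ (n : ℤ) (x : R), x ∈ 𝒜 n → x ≠ 0 → IsUnit x)
    (hex : ∃ (n : ℤ) (x : R), n ≠ 0 ∧ x ∈ 𝒜 n ∧ x ≠ 0) :
    (∀ x ∈ 𝒜 0, x ≠ 0 → ∃ y ∈ 𝒜 0, x * y = 1) ∧
    ∃ (n : ℤ) (T : Rˣ), 0 < n ∧ (T : R) ∈ 𝒜 n ∧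
      (∀ m : ℤ, 𝒜 m ≠ ⊥ → n ∣ m) ∧
      (∀ K : ℤ, ∀ y : R, y ∈ 𝒜 (K * n) ↔ ∃ a ∈ 𝒜 0, y = a * ((T ^ K : Rˣ) : R)) := by
  classical
  obtain ⟨d, x0, hd0, hx0mem, hx0ne⟩ := hex
  have hnt : Nontrivial R := nontrivial_of_ne x0 0 hx0ne
  have field_part : ∀ x ∈ 𝒜 0, x ≠ 0 → ∃ y ∈ 𝒜 0, x * y = 1 := by
    intro x hx hxne
    obtain ⟨u, rfl⟩ := hinv 0 x hx hxne
    refine ⟨((u⁻¹ : Rˣ) : R), ?_, u.mul_inv⟩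
    simpa using inv_mem_neg_aux 𝒜 u hx
  refine ⟨field_part, ?_⟩
  set S : AddSubgroup ℤ :=
    { carrier := {m | ∃ x ∈ 𝒜 m, x ≠ 0}
      zero_mem' := ⟨1, SetLike.one_mem_graded 𝒜, one_ne_zero⟩
      add_mem' := by
        rintro a b ⟨x, hx, hxne⟩ ⟨y, hy, hyne⟩
        exact ⟨x * y, SetLike.mul_mem_graded hx hy,
          ((hinv a x hx hxne).mul (hinv b y hy hyne)).ne_zero⟩
      neg_mem' := by
        rintro a ⟨x, hx, hxne⟩
        obtain ⟨u, rfl⟩ := hinv a x hx hxne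
        exact ⟨((u⁻¹ : Rˣ) : R), inv_mem_neg_aux 𝒜 u hx, Units.ne_zero _⟩ } with hS
  obtain ⟨g, hg⟩ := Int.subgroup_cyclic S
  have hdS : d ∈ S := ⟨x0, hx0mem, hx0ne⟩
  have hgdvd : ∀ m ∈ S, g ∣ m := by
    intro m hm
    rw [hg, AddSubgroup.mem_closure_singleton] at hm
    obtain ⟨k, hk⟩ := hm
    exact ⟨k, by rw [← hk]; rw [smul_eq_mul]; ring⟩
  have hgne : g ≠ 0 := by
    rintro rfl
    exact hd0 (zero_dvd_iff.mp (hgdvd d hdS))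
  set n := |g| with hn
  have hnpos : 0 < n := abs_pos.mpr hgne
  have hgS : g ∈ S := by
    rw [hg]; exact AddSubgroup.subset_closure (Set.mem_singleton g)
  have hnS : n ∈ S := by
    rcases abs_cases g with ⟨h, _⟩ | ⟨h, _⟩
    · rw [hn, h]; exact hgS
    · rw [hn, h]; exact S.neg_mem hgS
  obtain ⟨t, htmem, htne⟩ := hnS
  obtain ⟨T, rfl⟩ := hinv n t htmem htne
  refine ⟨n, T, hnpos, htmem, ?_, ?_⟩
  · intro m hm
    have hmS : m ∈ S := by
      by_contra hcon
      apply hm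
      rw [eq_bot_iff]
      intro x hx
      by_contra hx0
      exact hcon ⟨x, hx, fun h => hx0 (by simpa [h] using hx0 ∘ id <| h ▸ rfl)⟩
    exact (abs_dvd g m).mpr (hgdvd m hmS)
  · intro K y
    constructor
    · intro hy
      by_cases hy0 : y = 0
      · exact ⟨0, zero_mem _, by simp [hy0]⟩
      refine ⟨y * ((T ^ (-K) : Rˣ) : R), ?_, ?_⟩
      · have h1 : ((T ^ (-K) : Rˣ) : R) ∈ 𝒜 (-K * n) := zpow_mem_aux 𝒜 T htmem (-K)
        have h2 := SetLike.mul_mem_graded hy h1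
        rwa [show K * n + -K * n = (0 : ℤ) by ring] at h2
      · rw [mul_assoc, ← Units.val_mul, ← zpow_add]
        simp
    · rintro ⟨a, ha, rfl⟩
      have h1 : ((T ^ K : Rˣ) : R) ∈ 𝒜 (K * n) := zpow_mem_aux 𝒜 T htmem K
      have h2 := SetLike.mul_mem_graded ha h1
      rwa [zero_add] at h2
end

section
/- Let R be a commutative ring with an ℕ-grading 𝒜 : ℕ → AddSubmonoid R making R a graded ring, and let 𝔭 be a prime ideal of R that is not homogeneous. Let 𝔭* be the homogenization of 𝔭, i.e., the ideal generated by all homogeneous elements of 𝔭 (equivalently, the homogeneous core Ideal.homogeneousCore 𝒜 𝔭). Then 𝔭* is a prime ideal, 𝔭* is strictly contained in 𝔭, and there is no prime ideal 𝔮 with 𝔭* ⊊ 𝔮 ⊊ 𝔭. Equivalently, the height of 𝔭/𝔭* in R/𝔭* is exactly 1. -/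
/-!
Measure an element `x ∉ 𝔭*` by the degrees of its homogeneous components that lie outside `𝔭`:
they range from `botDeg x` to `topDeg x`, and as `𝔭` is prime both are additive on products, so
the width `topDeg - botDeg` is additive and only depends on `x` modulo `𝔭*`. Fix `a ∈ 𝔭 ∖ 𝔭*` of
minimal width; the width is positive because `𝔭` contains no homogeneous element outside `𝔭*`.
Cancelling leading terms against `a` lowers the width of elements of `𝔭`, so every `x ∈ 𝔭`
satisfies `s * x ≡ y * a (mod 𝔭*)` with `s` homogeneous and `s ∉ 𝔭`. For a prime `𝔮` with
`𝔭* < 𝔮 ≤ 𝔭`, apply this to a `u ∈ 𝔮 ∖ 𝔭*` of minimal width: if `a ∉ 𝔮` then `y ∈ 𝔮 ∖ 𝔭*` would be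
narrower than `u`. Hence `a ∈ 𝔮`, and then `𝔭 ≤ 𝔮`.
-/

open DirectSum Finset

namespace Ideal

section Antidiagonal

variable {ι R : Type*} [CommRing R] [DecidableEq ι] [AddMonoid ι] [HasAntidiagonal ι]
  (𝒜 : ι → AddSubmonoid R) [GradedRing 𝒜] {I : Ideal R} {x y : R}

theorem decompose_mul_mem {k : ι}
    (h : ∀ i j, i + j = k → (decompose 𝒜 x i : R) ∈ I ∨ (decompose 𝒜 y j : R) ∈ I) :
    (decompose 𝒜 (x * y) k : R) ∈ I := by
  rw [decompose_mul, coe_mul_apply_eq_sum_antidiagonal]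
  refine I.sum_mem fun ij hij => ?_
  rcases h ij.1 ij.2 (mem_antidiagonal.1 hij) with hx | hy
  · exact I.mul_mem_right _ hx
  · exact I.mul_mem_left _ hy

theorem decompose_mul_add_sub_mem {n m : ι}
    (h : ∀ i j, i + j = n + m → (i, j) ≠ (n, m) →
      (decompose 𝒜 x i : R) ∈ I ∨ (decompose 𝒜 y j : R) ∈ I) :
    (decompose 𝒜 (x * y) (n + m) : R) - decompose 𝒜 x n * decompose 𝒜 y m ∈ I := by
  rw [decompose_mul, coe_mul_apply_eq_sum_antidiagonal,
    ← sum_erase_add _ _ (mem_antidiagonal.2 (rfl : (n, m).1 + (n, m).2 = n + m)),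
    add_sub_cancel_right]
  refine I.sum_mem fun ij hij => ?_
  obtain ⟨hne, hij⟩ := mem_erase.1 hij
  rcases h ij.1 ij.2 (mem_antidiagonal.1 hij) hne with hx | hy
  · exact I.mul_mem_right _ hx
  · exact I.mul_mem_left _ hy

theorem decompose_mul_add_notMem {P : Ideal R} (hP : P.IsPrime) {n m : ι}
    (hx : (decompose 𝒜 x n : R) ∉ P) (hy : (decompose 𝒜 y m : R) ∉ P)
    (h : ∀ i j, i + j = n + m → (i, j) ≠ (n, m) →
      (decompose 𝒜 x i : R) ∈ P ∨ (decompose 𝒜 y j : R) ∈ P) :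
    (decompose 𝒜 (x * y) (n + m) : R) ∉ P := fun hxy =>
  hP.mul_notMem hx hy <| by simpa using P.sub_mem hxy (decompose_mul_add_sub_mem 𝒜 h)

end Antidiagonal

variable {R : Type*} [CommRing R] (𝒜 : ℕ → AddSubmonoid R) [GradedRing 𝒜]

theorem mem_homogeneousCore_iff (I : Ideal R) {x : R} :
    x ∈ (I.homogeneousCore 𝒜).toIdeal ↔ ∀ i, (decompose 𝒜 x i : R) ∈ I := by
  rw [(I.homogeneousCore 𝒜).isHomogeneous.mem_iff]
  exact forall_congr' fun i => ⟨fun h => toIdeal_homogeneousCore_le 𝒜 I h,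
    mem_homogeneousCore_of_homogeneous_of_mem ⟨i, SetLike.coe_mem _⟩⟩

-- Both `topDeg` and `botDeg` take the junk value `0` when `x ∈ (I.homogeneousCore 𝒜).toIdeal`,
-- i.e. when no component of `x` lies outside `I`.
noncomputable def topDeg (I : Ideal R) (x : R) : ℕ := sSup {i | (decompose 𝒜 x i : R) ∉ I}

noncomputable def botDeg (I : Ideal R) (x : R) : ℕ := sInf {i | (decompose 𝒜 x i : R) ∉ I}

noncomputable def degWidth (I : Ideal R) (x : R) : ℕ := I.topDeg 𝒜 x - I.botDeg 𝒜 x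

theorem coe_decompose_sub (x y : R) (i : ℕ) :
    (decompose 𝒜 (x - y) i : R) = decompose 𝒜 x i - decompose 𝒜 y i :=
  map_sub (GradedRing.proj 𝒜 i) x y

variable {𝒜} {I : Ideal R} {x y : R} {n k : ℕ}

theorem bddAbove_setOf_decompose_notMem : BddAbove {i | (decompose 𝒜 x i : R) ∉ I} := by
  classical
  refine (DFinsupp.support (decompose 𝒜 x)).finite_toSet.subset (fun i hi => ?_) |>.bddAbove
  exact DFinsupp.mem_support_iff.2 fun h0 => hi (by simp [h0])

theorem exists_decompose_notMem (hx : x ∉ (I.homogeneousCore 𝒜).toIdeal) :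
    ∃ i, (decompose 𝒜 x i : R) ∉ I :=
  not_forall.1 (mt (mem_homogeneousCore_iff 𝒜 I).2 hx)

theorem le_topDeg (h : (decompose 𝒜 x k : R) ∉ I) : k ≤ I.topDeg 𝒜 x :=
  le_csSup bddAbove_setOf_decompose_notMem h

theorem botDeg_le (h : (decompose 𝒜 x k : R) ∉ I) : I.botDeg 𝒜 x ≤ k :=
  Nat.sInf_le h

theorem topDeg_le (h : ∀ k, n < k → (decompose 𝒜 x k : R) ∈ I) : I.topDeg 𝒜 x ≤ n :=
  csSup_le' fun k hk => not_lt.1 fun hlt => hk (h k hlt)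

theorem le_botDeg (hx : x ∉ (I.homogeneousCore 𝒜).toIdeal)
    (h : ∀ k < n, (decompose 𝒜 x k : R) ∈ I) : n ≤ I.botDeg 𝒜 x :=
  le_csInf (exists_decompose_notMem hx) fun k hk => not_lt.1 fun hlt => hk (h k hlt)

theorem decompose_mem_of_topDeg_lt (h : I.topDeg 𝒜 x < k) : (decompose 𝒜 x k : R) ∈ I :=
  not_not.1 fun hk => h.not_ge (le_topDeg hk)

theorem decompose_mem_of_lt_botDeg (h : k < I.botDeg 𝒜 x) : (decompose 𝒜 x k : R) ∈ I :=
  not_not.1 fun hk => h.not_ge (botDeg_le hk)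

theorem decompose_topDeg_notMem (hx : x ∉ (I.homogeneousCore 𝒜).toIdeal) :
    (decompose 𝒜 x (I.topDeg 𝒜 x) : R) ∉ I :=
  Nat.sSup_mem (exists_decompose_notMem hx) bddAbove_setOf_decompose_notMem

theorem decompose_botDeg_notMem (hx : x ∉ (I.homogeneousCore 𝒜).toIdeal) :
    (decompose 𝒜 x (I.botDeg 𝒜 x) : R) ∉ I :=
  Nat.sInf_mem (exists_decompose_notMem hx)

theorem botDeg_le_topDeg (hx : x ∉ (I.homogeneousCore 𝒜).toIdeal) :
    I.botDeg 𝒜 x ≤ I.topDeg 𝒜 x :=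
  botDeg_le (decompose_topDeg_notMem hx)

theorem topDeg_eq (hn : (decompose 𝒜 x n : R) ∉ I) (h : ∀ k, n < k → (decompose 𝒜 x k : R) ∈ I) :
    I.topDeg 𝒜 x = n :=
  le_antisymm (topDeg_le h) (le_topDeg hn)

theorem botDeg_eq (hn : (decompose 𝒜 x n : R) ∉ I) (h : ∀ k < n, (decompose 𝒜 x k : R) ∈ I) :
    I.botDeg 𝒜 x = n :=
  le_antisymm (botDeg_le hn) (le_botDeg (fun hx => hn ((mem_homogeneousCore_iff 𝒜 I).1 hx n)) h)

theorem topDeg_eq_and_botDeg_eq_of_mem {s : R} (hs : s ∈ 𝒜 n) (hsI : s ∉ I) :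
    I.topDeg 𝒜 s = n ∧ I.botDeg 𝒜 s = n := by
  have hn : (decompose 𝒜 s n : R) ∉ I := by rwa [decompose_of_mem_same 𝒜 hs]
  have hk : ∀ k ≠ n, (decompose 𝒜 s k : R) ∈ I := fun k hk => by
    rw [decompose_of_mem_ne 𝒜 hs hk.symm]; exact I.zero_mem
  exact ⟨topDeg_eq hn fun k h => hk k h.ne', botDeg_eq hn fun k h => hk k h.ne⟩

theorem degWidth_eq_zero_of_mem {s : R} (hs : s ∈ 𝒜 n) (hsI : s ∉ I) : I.degWidth 𝒜 s = 0 := by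
  obtain ⟨htop, hbot⟩ := topDeg_eq_and_botDeg_eq_of_mem hs hsI
  rw [degWidth, htop, hbot, Nat.sub_self]

theorem decompose_mul_mem_of_topDeg_add_lt (h : I.topDeg 𝒜 x + I.topDeg 𝒜 y < k) :
    (decompose 𝒜 (x * y) k : R) ∈ I :=
  decompose_mul_mem 𝒜 fun i j hij => by
    by_cases hi : I.topDeg 𝒜 x < i
    · exact .inl (decompose_mem_of_topDeg_lt hi)
    · exact .inr (decompose_mem_of_topDeg_lt (by omega))

theorem decompose_mul_mem_of_lt_botDeg_add (h : k < I.botDeg 𝒜 x + I.botDeg 𝒜 y) :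
    (decompose 𝒜 (x * y) k : R) ∈ I :=
  decompose_mul_mem 𝒜 fun i j hij => by
    by_cases hi : i < I.botDeg 𝒜 x
    · exact .inl (decompose_mem_of_lt_botDeg hi)
    · exact .inr (decompose_mem_of_lt_botDeg (by omega))

theorem degWidth_eq_of_sub_mem (h : x - y ∈ (I.homogeneousCore 𝒜).toIdeal) :
    I.degWidth 𝒜 x = I.degWidth 𝒜 y := by
  have hxy : ∀ i, (decompose 𝒜 x i : R) - decompose 𝒜 y i ∈ I := fun i => by
    rw [← coe_decompose_sub]; exact (mem_homogeneousCore_iff 𝒜 I).1 h i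
  have : {i | (decompose 𝒜 x i : R) ∉ I} = {i | (decompose 𝒜 y i : R) ∉ I} := by
    ext i
    exact not_congr ⟨fun hx => by simpa using I.sub_mem hx (hxy i),
      fun hy => by simpa using I.add_mem (hxy i) hy⟩
  simp only [degWidth, topDeg, botDeg, this]

theorem degWidth_pos (hxI : x ∈ I) (hx : x ∉ (I.homogeneousCore 𝒜).toIdeal) :
    0 < I.degWidth 𝒜 x := by
  by_contra! h0
  set n := I.topDeg 𝒜 x
  have hother : ∀ k ≠ n, (decompose 𝒜 x k : R) ∈ I := fun k hk => by
    rcases hk.lt_or_gt with hlt | hlt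
    · exact decompose_mem_of_lt_botDeg (by unfold degWidth at h0; omega)
    · exact decompose_mem_of_topDeg_lt hlt
  have hrest : x - decompose 𝒜 x n ∈ (I.homogeneousCore 𝒜).toIdeal := by
    refine (mem_homogeneousCore_iff 𝒜 I).2 fun k => ?_
    rw [coe_decompose_sub]
    rcases eq_or_ne k n with rfl | hk
    · rw [decompose_of_mem_same 𝒜 (SetLike.coe_mem _), sub_self]; exact I.zero_mem
    · rw [decompose_of_mem_ne 𝒜 (SetLike.coe_mem _) hk.symm, sub_zero]; exact hother k hk
  exact decompose_topDeg_notMem hx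
    (by simpa using I.sub_mem hxI (toIdeal_homogeneousCore_le 𝒜 I hrest))

theorem degWidth_mul_sub_mul_lt {a : R} (ha : a ∉ (I.homogeneousCore 𝒜).toIdeal)
    (hx : x ∉ (I.homogeneousCore 𝒜).toIdeal) (hw : I.degWidth 𝒜 a ≤ I.degWidth 𝒜 x)
    (hc : (decompose 𝒜 a (I.topDeg 𝒜 a) : R) * x - decompose 𝒜 x (I.topDeg 𝒜 x) * a ∉
      (I.homogeneousCore 𝒜).toIdeal) :
    I.degWidth 𝒜 ((decompose 𝒜 a (I.topDeg 𝒜 a) : R) * x - decompose 𝒜 x (I.topDeg 𝒜 x) * a) <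
      I.degWidth 𝒜 x := by
  set d := I.topDeg 𝒜 a
  set e := I.topDeg 𝒜 x
  set s : R := (decompose 𝒜 a d : R)
  set t : R := (decompose 𝒜 x e : R)
  have hwidth : d - I.botDeg 𝒜 a ≤ e - I.botDeg 𝒜 x := hw
  have hba : I.botDeg 𝒜 a ≤ d := botDeg_le_topDeg ha
  have hbx : I.botDeg 𝒜 x ≤ e := botDeg_le_topDeg hx
  have hs : s ∈ 𝒜 d := SetLike.coe_mem _
  have ht : t ∈ 𝒜 e := SetLike.coe_mem _
  obtain ⟨hs_top, hs_bot⟩ := topDeg_eq_and_botDeg_eq_of_mem hs (decompose_topDeg_notMem ha)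
  obtain ⟨ht_top, ht_bot⟩ := topDeg_eq_and_botDeg_eq_of_mem ht (decompose_topDeg_notMem hx)
  have hsub : ∀ k, (decompose 𝒜 (s * x) k : R) ∈ I → (decompose 𝒜 (t * a) k : R) ∈ I →
      (decompose 𝒜 (s * x - t * a) k : R) ∈ I := fun k h₁ h₂ => by
    rw [coe_decompose_sub]; exact I.sub_mem h₁ h₂
  have hlead : (decompose 𝒜 (s * x - t * a) (d + e) : R) = 0 := by
    rw [coe_decompose_sub, coe_decompose_mul_add_of_left_mem 𝒜 hs, add_comm d e,
      coe_decompose_mul_add_of_left_mem 𝒜 ht, mul_comm, sub_self]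
  have htop : I.topDeg 𝒜 (s * x - t * a) < d + e := by
    refine lt_of_le_of_ne (topDeg_le fun k hk => hsub k ?_ ?_) fun h => ?_
    · exact decompose_mul_mem_of_topDeg_add_lt (by omega)
    · exact decompose_mul_mem_of_topDeg_add_lt (by omega)
    · exact decompose_topDeg_notMem hc (by rw [h, hlead]; exact I.zero_mem)
  -- at the bottom nothing cancels, but `t * a` starts no lower than `s * x` since `a` is
  -- no wider than `x`
  have hbot : d + I.botDeg 𝒜 x ≤ I.botDeg 𝒜 (s * x - t * a) := le_botDeg hc fun k hk =>
    hsub k (decompose_mul_mem_of_lt_botDeg_add (by omega))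
      (decompose_mul_mem_of_lt_botDeg_add (by omega))
  have := botDeg_le_topDeg hc
  show _ - _ < e - _
  omega

theorem exists_forall_degWidth_le {J : Ideal R} (h : (I.homogeneousCore 𝒜).toIdeal < J) :
    ∃ a ∈ J, a ∉ (I.homogeneousCore 𝒜).toIdeal ∧
      ∀ z ∈ J, z ∉ (I.homogeneousCore 𝒜).toIdeal → I.degWidth 𝒜 a ≤ I.degWidth 𝒜 z := by
  obtain ⟨a, ⟨haJ, haK⟩, hmin⟩ := exists_minimalFor_of_wellFoundedLT
    (fun z => z ∈ J ∧ z ∉ (I.homogeneousCore 𝒜).toIdeal) (I.degWidth 𝒜) (SetLike.exists_of_lt h)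
  exact ⟨a, haJ, haK, fun z hzJ hzK => (le_total _ _).elim id (hmin ⟨hzJ, hzK⟩)⟩

section IsPrime

variable {𝔭 : Ideal R} (hp : 𝔭.IsPrime)
include hp

theorem topDeg_mul (hx : x ∉ (𝔭.homogeneousCore 𝒜).toIdeal)
    (hy : y ∉ (𝔭.homogeneousCore 𝒜).toIdeal) :
    𝔭.topDeg 𝒜 (x * y) = 𝔭.topDeg 𝒜 x + 𝔭.topDeg 𝒜 y := by
  refine topDeg_eq (decompose_mul_add_notMem 𝒜 hp (decompose_topDeg_notMem hx)
    (decompose_topDeg_notMem hy) fun i j hij hne => ?_) fun k => decompose_mul_mem_of_topDeg_add_lt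
  by_cases hi : 𝔭.topDeg 𝒜 x < i
  · exact .inl (decompose_mem_of_topDeg_lt hi)
  · refine .inr (decompose_mem_of_topDeg_lt ?_)
    by_contra
    exact hne (Prod.ext (by omega) (by omega))

theorem botDeg_mul (hx : x ∉ (𝔭.homogeneousCore 𝒜).toIdeal)
    (hy : y ∉ (𝔭.homogeneousCore 𝒜).toIdeal) :
    𝔭.botDeg 𝒜 (x * y) = 𝔭.botDeg 𝒜 x + 𝔭.botDeg 𝒜 y := by
  refine botDeg_eq (decompose_mul_add_notMem 𝒜 hp (decompose_botDeg_notMem hx)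
    (decompose_botDeg_notMem hy) fun i j hij hne => ?_) fun k => decompose_mul_mem_of_lt_botDeg_add
  by_cases hi : i < 𝔭.botDeg 𝒜 x
  · exact .inl (decompose_mem_of_lt_botDeg hi)
  · refine .inr (decompose_mem_of_lt_botDeg ?_)
    by_contra
    exact hne (Prod.ext (by omega) (by omega))

theorem degWidth_mul (hx : x ∉ (𝔭.homogeneousCore 𝒜).toIdeal)
    (hy : y ∉ (𝔭.homogeneousCore 𝒜).toIdeal) :
    𝔭.degWidth 𝒜 (x * y) = 𝔭.degWidth 𝒜 x + 𝔭.degWidth 𝒜 y := by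
  have := botDeg_le_topDeg hx
  have := botDeg_le_topDeg hy
  simp only [degWidth, topDeg_mul hp hx hy, botDeg_mul hp hx hy]
  omega

theorem exists_mul_sub_mul_mem_homogeneousCore {a : R} (ha : a ∈ 𝔭)
    (haK : a ∉ (𝔭.homogeneousCore 𝒜).toIdeal)
    (hmin : ∀ z ∈ 𝔭, z ∉ (𝔭.homogeneousCore 𝒜).toIdeal → 𝔭.degWidth 𝒜 a ≤ 𝔭.degWidth 𝒜 z)
    (hx : x ∈ 𝔭) :
    ∃ s, SetLike.IsHomogeneousElem 𝒜 s ∧ s ∉ 𝔭 ∧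
      ∃ y, s * x - y * a ∈ (𝔭.homogeneousCore 𝒜).toIdeal := by
  induction hn : 𝔭.degWidth 𝒜 x using Nat.strong_induction_on generalizing x with
  | _ n ih =>
  by_cases hxK : x ∈ (𝔭.homogeneousCore 𝒜).toIdeal
  · exact ⟨1, ⟨0, SetLike.GradedOne.one_mem⟩, (𝔭.ne_top_iff_one).1 hp.ne_top, 0,
      by simpa using hxK⟩
  set s : R := (decompose 𝒜 a (𝔭.topDeg 𝒜 a) : R)
  set t : R := (decompose 𝒜 x (𝔭.topDeg 𝒜 x) : R)
  have hs : SetLike.IsHomogeneousElem 𝒜 s := ⟨_, SetLike.coe_mem _⟩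
  have hs𝔭 : s ∉ 𝔭 := decompose_topDeg_notMem haK
  by_cases hcK : s * x - t * a ∈ (𝔭.homogeneousCore 𝒜).toIdeal
  · exact ⟨s, hs, hs𝔭, t, hcK⟩
  have hc𝔭 : s * x - t * a ∈ 𝔭 := 𝔭.sub_mem (𝔭.mul_mem_left _ hx) (𝔭.mul_mem_left _ ha)
  obtain ⟨s₁, hs₁, hs₁𝔭, y, hy⟩ :=
    ih _ (hn ▸ degWidth_mul_sub_mul_lt haK hxK (hmin x hx hxK) hcK) hc𝔭 rfl
  refine ⟨s₁ * s, hs₁.mul hs, hp.mul_notMem hs₁𝔭 hs𝔭, s₁ * t + y, ?_⟩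
  convert hy using 1
  ring

theorem mem_of_homogeneousCore_lt {𝔮 : Ideal R} (hq : 𝔮.IsPrime)
    (h𝔮 : (𝔭.homogeneousCore 𝒜).toIdeal < 𝔮) (h𝔮𝔭 : 𝔮 ≤ 𝔭) {a : R} (ha : a ∈ 𝔭)
    (haK : a ∉ (𝔭.homogeneousCore 𝒜).toIdeal)
    (hmin : ∀ z ∈ 𝔭, z ∉ (𝔭.homogeneousCore 𝒜).toIdeal → 𝔭.degWidth 𝒜 a ≤ 𝔭.degWidth 𝒜 z) :
    a ∈ 𝔮 := by
  obtain ⟨u, hu𝔮, huK, humin⟩ := exists_forall_degWidth_le h𝔮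
  obtain ⟨s, ⟨d, hs⟩, hs𝔭, y, hy⟩ :=
    exists_mul_sub_mul_mem_homogeneousCore hp ha haK hmin (h𝔮𝔭 hu𝔮)
  have hsK : s ∉ (𝔭.homogeneousCore 𝒜).toIdeal := fun h => hs𝔭 (toIdeal_homogeneousCore_le 𝒜 𝔭 h)
  have hsuK : s * u ∉ (𝔭.homogeneousCore 𝒜).toIdeal := hp.homogeneousCore.mul_notMem hsK huK
  have hyaK : y * a ∉ (𝔭.homogeneousCore 𝒜).toIdeal := fun h => hsuK (by simpa using add_mem hy h)
  have hyK : y ∉ (𝔭.homogeneousCore 𝒜).toIdeal := fun h => hyaK (Ideal.mul_mem_right _ _ h)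
  have hwidth : 𝔭.degWidth 𝒜 u = 𝔭.degWidth 𝒜 y + 𝔭.degWidth 𝒜 a := by
    have := degWidth_eq_of_sub_mem hy
    rwa [degWidth_mul hp hsK huK, degWidth_mul hp hyK haK, degWidth_eq_zero_of_mem hs hs𝔭,
      zero_add] at this
  have hya𝔮 : y * a ∈ 𝔮 := by simpa using 𝔮.sub_mem (𝔮.mul_mem_left s hu𝔮) (h𝔮.le hy)
  refine (hq.mem_or_mem hya𝔮).resolve_left fun hy𝔮 => ?_
  have := humin y hy𝔮 hyK
  have := degWidth_pos ha haK
  omega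

theorem eq_of_homogeneousCore_lt_of_le {𝔮 : Ideal R} (hq : 𝔮.IsPrime)
    (h𝔮 : (𝔭.homogeneousCore 𝒜).toIdeal < 𝔮) (h𝔮𝔭 : 𝔮 ≤ 𝔭) : 𝔮 = 𝔭 := by
  obtain ⟨a, ha, haK, hmin⟩ := exists_forall_degWidth_le (h𝔮.trans_le h𝔮𝔭)
  have ha𝔮 := mem_of_homogeneousCore_lt hp hq h𝔮 h𝔮𝔭 ha haK hmin
  refine le_antisymm h𝔮𝔭 fun x hx => ?_
  obtain ⟨s, -, hs𝔭, y, hy⟩ := exists_mul_sub_mul_mem_homogeneousCore hp ha haK hmin hx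
  have hsx : s * x ∈ 𝔮 := by simpa using 𝔮.add_mem (h𝔮.le hy) (𝔮.mul_mem_left y ha𝔮)
  exact (hq.mem_or_mem hsx).resolve_left fun hs => hs𝔭 (h𝔮𝔭 hs)

end IsPrime

end Ideal

/-- let `R` be an `ℕ`-graded commutative ring and `𝔭` a prime ideal of `R`
that is not homogeneous.  Then the homogenization `𝔭* = Ideal.homogeneousCore 𝒜 𝔭` (the
ideal generated by the homogeneous elements of `𝔭`) is a prime ideal, it is strictly
contained in `𝔭`, and there is no prime ideal strictly between `𝔭*` and `𝔭`;
i.e. `height (𝔭/𝔭*) = 1`. -/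
theorem homogeneousCore_prime_and_no_intermediate_prime
    {R : Type*} [CommRing R] (𝒜 : ℕ → AddSubmonoid R) [GradedRing 𝒜]
    (𝔭 : Ideal R) (hp : 𝔭.IsPrime) (hns : ¬ 𝔭.IsHomogeneous 𝒜) :
    (Ideal.homogeneousCore 𝒜 𝔭).toIdeal.IsPrime ∧
      (Ideal.homogeneousCore 𝒜 𝔭).toIdeal < 𝔭 ∧
      ¬ ∃ 𝔮 : Ideal R, 𝔮.IsPrime ∧
          (Ideal.homogeneousCore 𝒜 𝔭).toIdeal < 𝔮 ∧ 𝔮 < 𝔭 := by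
  have hlt : (𝔭.homogeneousCore 𝒜).toIdeal < 𝔭 :=
    (Ideal.toIdeal_homogeneousCore_le 𝒜 𝔭).lt_of_ne fun h =>
      hns ((Ideal.IsHomogeneous.iff_eq 𝒜 𝔭).2 h)
  refine ⟨hp.homogeneousCore, hlt, ?_⟩
  rintro ⟨𝔮, hq, h𝔮, h𝔮𝔭⟩
  exact h𝔮𝔭.ne (Ideal.eq_of_homogeneousCore_lt_of_le hp hq h𝔮 h𝔮𝔭.le)
end

section
/- Let k be a field and R a commutative graded k-algebra with grading 𝒜 : ℕ → Submodule k R, 𝒜 0 = k·1, which is a Hilbert–Serre ring with Hilbert–Serre dimension d(R). Let h ≥ 1 and let x ∈ 𝒜 h be a non-zero-divisor of R (hence a non-unit). For each n let B n be the image of 𝒜 n under the quotient map R → R/(x). Then R/(x), graded by the B n, is a Hilbert–Serre ring and its Hilbert–Serre dimension equals d(R) − 1. -/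
/-!
Multiplication by `x` identifies `𝒜 (n - h)` with the degree-`n` part of the ideal `(x)`, so
`dim B n = dim 𝒜 n - dim 𝒜 (n - h)`, i.e. `P_{R/(x)}(t) = (1 - t ^ h) P_R(t)`. Since
`1 - t ≤ 1 - t ^ h ≤ h (1 - t)` on `(0,1)`, a bound on `(1 - t) ^ d P_R` bounds
`(1 - t) ^ (d - 1) P_{R/(x)}`, and a bound on `(1 - t) ^ d P_{R/(x)}` bounds
`(1 - t) ^ (d + 1) P_R`; in the second direction `P_R(t)` converges because its partial sums
stay below `P_{R/(x)}(t) / (1 - t ^ h)`.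
-/

/-- The boundedness condition defining Hilbert–Serre rings: for all `t ∈ (0,1)` the
Poincaré series `∑ F n * tⁿ` converges and `(1 - t) ^ d` times its sum is bounded by a
uniform constant `C > 0`. -/
def HSBound (F : ℕ → ℕ) (d : ℕ) : Prop :=
  ∃ C : ℝ, 0 < C ∧ ∀ t : ℝ, t ∈ Set.Ioo (0 : ℝ) 1 →
    Summable (fun n => (F n : ℝ) * t ^ n) ∧
      (1 - t) ^ d * (∑' n, (F n : ℝ) * t ^ n) ≤ C

/-- A graded algebra with grading `𝒜` is a *Hilbert–Serre ring* if every graded component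
is finite dimensional over `k` and the Poincaré series `∑ dim_k (𝒜 n) tⁿ` satisfies the
boundedness condition `HSBound` for some `d`. -/
def IsHilbertSerre {k R : Type*} [Field k] [CommRing R] [Algebra k R]
    (𝒜 : ℕ → Submodule k R) : Prop :=
  (∀ n, FiniteDimensional k (𝒜 n)) ∧
    ∃ d, HSBound (fun n => Module.finrank k (𝒜 n)) d

/-- The Hilbert–Serre dimension `d(R)`: the least `d` such that `(1-t)^d P_R(t)` is
bounded on `(0,1)`. -/
noncomputable def hsDim {k R : Type*} [Field k] [CommRing R] [Algebra k R]
    (𝒜 : ℕ → Submodule k R) : ℕ :=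
  sInf {d | HSBound (fun n => Module.finrank k (𝒜 n)) d}

open Module

theorem Submodule.finrank_map_add_finrank_inf_ker {K M N : Type*} [DivisionRing K]
    [AddCommGroup M] [Module K M] [AddCommGroup N] [Module K N]
    (f : M →ₗ[K] N) (V : Submodule K M) [FiniteDimensional K V] :
    finrank K (V.map f) + finrank K ↥(V ⊓ LinearMap.ker f) = finrank K V := by
  rw [← LinearMap.range_domRestrict, ← map_comap_subtype, finrank_map_subtype_eq,
    ← LinearMap.ker_domRestrict]
  exact LinearMap.finrank_range_add_finrank_ker _

section Graded

variable {k R : Type*} [CommRing R] {h : ℕ} {x : R}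

theorem restrictScalars_span_singleton_inf_grade [CommSemiring k] [Algebra k R]
    (𝒜 : ℕ → Submodule k R) [GradedAlgebra 𝒜] (hx : x ∈ 𝒜 h) (n : ℕ) :
    (Ideal.span {x}).restrictScalars k ⊓ 𝒜 n =
      if h ≤ n then (𝒜 (n - h)).map (LinearMap.mulLeft k x) else ⊥ := by
  ext y
  simp only [Submodule.mem_inf, Submodule.restrictScalars_mem, Ideal.mem_span_singleton']
  constructor
  · rintro ⟨⟨a, rfl⟩, hy⟩
    have hdecomp := DirectSum.coe_decompose_mul_of_left_mem 𝒜 n (b := a) hx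
    rw [mul_comm, DirectSum.decompose_of_mem_same 𝒜 hy] at hdecomp
    split_ifs at hdecomp ⊢ with hn
    · exact ⟨_, SetLike.coe_mem _, hdecomp.symm⟩
    · exact hdecomp
  · split_ifs with hn
    · rintro ⟨z, hz, rfl⟩
      refine ⟨⟨z, mul_comm z x⟩, ?_⟩
      simpa [Nat.add_sub_cancel' hn] using SetLike.mul_mem_graded hx hz
    · rintro hy
      rw [(Submodule.mem_bot k).1 hy]
      exact ⟨⟨0, zero_mul x⟩, zero_mem _⟩

theorem finrank_map_mk_span_singleton_add [Field k] [Algebra k R]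
    (𝒜 : ℕ → Submodule k R) [GradedAlgebra 𝒜] (hx : x ∈ 𝒜 h) (hreg : ∀ y : R, x * y = 0 → y = 0)
    (n : ℕ) [FiniteDimensional k (𝒜 n)] :
    finrank k ((𝒜 n).map (Ideal.Quotient.mkₐ k (Ideal.span {x})).toLinearMap) +
      (if h ≤ n then finrank k (𝒜 (n - h)) else 0) = finrank k (𝒜 n) := by
  have hker : LinearMap.ker (Ideal.Quotient.mkₐ k (Ideal.span {x})).toLinearMap =
      (Ideal.span {x}).restrictScalars k := by
    ext y
    simp [Ideal.Quotient.eq_zero_iff_mem]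
  have hinj : Function.Injective (LinearMap.mulLeft k x) := fun (a b : R) hab =>
    sub_eq_zero.1 (hreg _ (by rw [mul_sub]; exact sub_eq_zero.2 hab))
  have hrank := Submodule.finrank_map_add_finrank_inf_ker
    (Ideal.Quotient.mkₐ k (Ideal.span {x})).toLinearMap (𝒜 n)
  rw [hker, inf_comm] at hrank
  have hinf := restrictScalars_span_singleton_inf_grade 𝒜 hx n
  by_cases hn : h ≤ n
  · rw [if_pos hn] at hinf ⊢
    rwa [hinf, ← (Submodule.equivMapOfInjective _ hinj _).finrank_eq] at hrank
  · rw [if_neg hn] at hinf ⊢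
    rwa [hinf, finrank_bot] at hrank

end Graded

section PoincareSeries

open Finset

theorem hasSum_ite_sub {M : Type*} [AddCommGroup M] [TopologicalSpace M] [IsTopologicalAddGroup M]
    {f : ℕ → M} {s : M} (hf : HasSum f s) (h : ℕ) :
    HasSum (fun n => if h ≤ n then f (n - h) else 0) s := by
  have hzero : ∑ n ∈ range h, (if h ≤ n then f (n - h) else 0) = 0 :=
    sum_eq_zero fun n hn => if_neg (not_le.2 (mem_range.1 hn))
  simpa [hzero] using (hasSum_nat_add_iff (f := fun n => if h ≤ n then f (n - h) else 0)
    (g := s) h).1 (by simpa using hf)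

theorem sum_range_add_ite_sub {M : Type*} [AddCommMonoid M] (f : ℕ → M) (h N : ℕ) :
    ∑ n ∈ range (h + N), (if h ≤ n then f (n - h) else 0) = ∑ n ∈ range N, f n := by
  rw [sum_range_add, sum_eq_zero fun n hn => if_neg (not_le.2 (mem_range.1 hn)), zero_add]
  simp

variable {F G : ℕ → ℕ} {h : ℕ} {t : ℝ}

theorem term_eq_sub_shift_of_add_shift_eq
    (hFG : ∀ n, G n + (if h ≤ n then F (n - h) else 0) = F n) (n : ℕ) :
    (G n : ℝ) * t ^ n =
      F n * t ^ n - t ^ h * (if h ≤ n then F (n - h) * t ^ (n - h) else 0) := by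
  rw [← hFG n]
  split_ifs with hn
  · rw [← pow_mul_pow_sub t hn]
    push_cast
    ring
  · simp

theorem hasSum_of_add_shift_eq (hFG : ∀ n, G n + (if h ≤ n then F (n - h) else 0) = F n)
    (hF : Summable fun n => (F n : ℝ) * t ^ n) :
    HasSum (fun n => (G n : ℝ) * t ^ n) ((1 - t ^ h) * ∑' n, (F n : ℝ) * t ^ n) := by
  rw [funext (term_eq_sub_shift_of_add_shift_eq hFG), sub_mul, one_mul]
  exact hF.hasSum.sub ((hasSum_ite_sub hF.hasSum h).mul_left (t ^ h))

theorem summable_of_add_shift_eq (hFG : ∀ n, G n + (if h ≤ n then F (n - h) else 0) = F n)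
    (ht : 0 ≤ t) (hth : t ^ h < 1) (hG : Summable fun n => (G n : ℝ) * t ^ n) :
    Summable fun n => (F n : ℝ) * t ^ n := by
  refine summable_of_sum_range_le (c := (∑' n, (G n : ℝ) * t ^ n) / (1 - t ^ h))
    (fun n => by positivity) fun N => ?_
  rw [le_div_iff₀ (by linarith)]
  have hsplit : ∑ n ∈ range (h + N), (F n : ℝ) * t ^ n =
      ∑ n ∈ range (h + N), (G n : ℝ) * t ^ n + t ^ h * ∑ n ∈ range N, (F n : ℝ) * t ^ n := by
    rw [← sum_range_add_ite_sub _ h N, mul_sum, ← sum_add_distrib]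
    refine sum_congr rfl fun n _ => ?_
    rw [term_eq_sub_shift_of_add_shift_eq hFG]
    ring
  have hmono : ∑ n ∈ range N, (F n : ℝ) * t ^ n ≤ ∑ n ∈ range (h + N), (F n : ℝ) * t ^ n :=
    sum_le_sum_of_subset_of_nonneg (range_subset_range.2 (by omega)) fun _ _ _ => by positivity
  have hG_le : ∑ n ∈ range (h + N), (G n : ℝ) * t ^ n ≤ ∑' n, (G n : ℝ) * t ^ n :=
    hG.sum_le_tsum _ fun _ _ => by positivity
  linarith

theorem HSBound.sub_one_of_add_shift_eq {d : ℕ} (hF : HSBound F d) (hh : 1 ≤ h)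
    (hFG : ∀ n, G n + (if h ≤ n then F (n - h) else 0) = F n) : HSBound G (d - 1) := by
  obtain ⟨C, hC, hbound⟩ := hF
  refine ⟨h * C, by positivity, fun t ht => ?_⟩
  obtain ⟨hsum, hle⟩ := hbound t ht
  have ht0 : 0 ≤ t := ht.1.le
  have hG := hasSum_of_add_shift_eq hFG hsum
  refine ⟨hG.summable, ?_⟩
  rw [hG.tsum_eq]
  have hS : 0 ≤ ∑' n, (F n : ℝ) * t ^ n := tsum_nonneg fun n => by positivity
  have h1t : 0 ≤ 1 - t := by linarith [ht.2]
  have hbern : 1 - t ^ h ≤ h * (1 - t) := by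
    have := one_add_mul_le_pow (show (-2 : ℝ) ≤ t - 1 by linarith [ht.1]) h
    rw [add_sub_cancel] at this
    linarith
  have hpow : (1 - t) ^ (d - 1) * (1 - t) ≤ (1 - t) ^ d := by
    rcases d with _ | d
    · simpa using ht0
    · simp [pow_succ]
  calc (1 - t) ^ (d - 1) * ((1 - t ^ h) * ∑' n, (F n : ℝ) * t ^ n)
      ≤ (1 - t) ^ (d - 1) * (h * (1 - t) * ∑' n, (F n : ℝ) * t ^ n) := by gcongr
    _ = h * ((1 - t) ^ (d - 1) * (1 - t) * ∑' n, (F n : ℝ) * t ^ n) := by ring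
    _ ≤ h * ((1 - t) ^ d * ∑' n, (F n : ℝ) * t ^ n) := by gcongr
    _ ≤ h * C := by gcongr

theorem HSBound.add_one_of_add_shift_eq {d : ℕ} (hG : HSBound G d) (hh : 1 ≤ h)
    (hFG : ∀ n, G n + (if h ≤ n then F (n - h) else 0) = F n) : HSBound F (d + 1) := by
  obtain ⟨C, hC, hbound⟩ := hG
  refine ⟨C, hC, fun t ht => ?_⟩
  obtain ⟨hsum, hle⟩ := hbound t ht
  have ht0 : 0 ≤ t := ht.1.le
  have hth : t ^ h ≤ t := pow_le_of_le_one ht0 ht.2.le (by omega)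
  have hF := summable_of_add_shift_eq hFG ht0 (hth.trans_lt ht.2) hsum
  refine ⟨hF, ?_⟩
  have hS : 0 ≤ ∑' n, (F n : ℝ) * t ^ n := tsum_nonneg fun n => by positivity
  have h1t : 0 ≤ 1 - t := by linarith [ht.2]
  calc (1 - t) ^ (d + 1) * ∑' n, (F n : ℝ) * t ^ n
      = (1 - t) ^ d * ((1 - t) * ∑' n, (F n : ℝ) * t ^ n) := by ring
    _ ≤ (1 - t) ^ d * ((1 - t ^ h) * ∑' n, (F n : ℝ) * t ^ n) := by gcongr
    _ = (1 - t) ^ d * ∑' n, (G n : ℝ) * t ^ n := by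
        rw [(hasSum_of_add_shift_eq hFG hF).tsum_eq]
    _ ≤ C := hle

theorem sInf_hsBound_of_add_shift_eq (hh : 1 ≤ h)
    (hFG : ∀ n, G n + (if h ≤ n then F (n - h) else 0) = F n) (hF : ∃ d, HSBound F d) :
    (∃ d, HSBound G d) ∧ sInf {d | HSBound G d} = sInf {d | HSBound F d} - 1 := by
  have hFmin : HSBound F (sInf {d | HSBound F d}) := Nat.sInf_mem hF
  have hG := hFmin.sub_one_of_add_shift_eq hh hFG
  refine ⟨⟨_, hG⟩, le_antisymm (Nat.sInf_le hG) ?_⟩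
  have hGmin : HSBound G (sInf {d | HSBound G d}) :=
    Nat.sInf_mem (s := {d | HSBound G d}) ⟨_, hG⟩
  have := Nat.sInf_le (s := {d | HSBound F d}) (hGmin.add_one_of_add_shift_eq hh hFG)
  omega

end PoincareSeries

theorem quotient_regular_hilbertSerre_general {k R : Type*} [Field k] [CommRing R] [Algebra k R]
    (𝒜 : ℕ → Submodule k R) [GradedAlgebra 𝒜]
    (hHS : IsHilbertSerre 𝒜)
    (h : ℕ) (hh : 1 ≤ h) (x : R) (hx : x ∈ 𝒜 h)
    (hreg : ∀ y : R, x * y = 0 → y = 0)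
    (B : ℕ → Submodule k (R ⧸ Ideal.span {x}))
    (hB : ∀ n, B n = (𝒜 n).map (Ideal.Quotient.mkₐ k (Ideal.span {x})).toLinearMap) :
    (∀ n, FiniteDimensional k (B n)) ∧
      (∃ d, HSBound (fun n => Module.finrank k (B n)) d) ∧
      sInf {d | HSBound (fun n => Module.finrank k (B n)) d} = hsDim 𝒜 - 1 := by
  obtain ⟨hfin, hF⟩ := hHS
  have hFG (n : ℕ) : finrank k (B n) + (if h ≤ n then finrank k (𝒜 (n - h)) else 0) =
      finrank k (𝒜 n) := by
    have := hfin n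
    rw [hB n]
    exact finrank_map_mk_span_singleton_add 𝒜 hx hreg n
  refine ⟨fun n => ?_, sInf_hsBound_of_add_shift_eq hh hFG hF⟩
  have := hfin n
  rw [hB n]
  infer_instance

/-- the quotient of a Hilbert–Serre ring by a homogeneous non-zero-divisor
`x` of degree `h ≥ 1` is again a Hilbert–Serre ring (for the grading by images of the
`𝒜 n`), and `d(R/(x)) = d(R) - 1`. -/
theorem quotient_regular_hilbertSerre {k R : Type*} [Field k] [CommRing R] [Algebra k R]
    (𝒜 : ℕ → Submodule k R) [GradedAlgebra 𝒜] (h0 : 𝒜 0 = 1)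
    (hHS : IsHilbertSerre 𝒜)
    (h : ℕ) (hh : 1 ≤ h) (x : R) (hx : x ∈ 𝒜 h)
    (hreg : ∀ y : R, x * y = 0 → y = 0)
    (B : ℕ → Submodule k (R ⧸ Ideal.span {x}))
    (hB : ∀ n, B n = (𝒜 n).map (Ideal.Quotient.mkₐ k (Ideal.span {x})).toLinearMap) :
    (∀ n, FiniteDimensional k (B n)) ∧
      (∃ d, HSBound (fun n => Module.finrank k (B n)) d) ∧
      sInf {d | HSBound (fun n => Module.finrank k (B n)) d} = hsDim 𝒜 - 1 :=
  quotient_regular_hilbertSerre_general 𝒜 hHS h hh x hx hreg B hB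
end

section
/- Let k be a field and R a commutative graded k-algebra with grading 𝒜 : ℕ → Submodule k R, 𝒜 0 = k·1. If R is a Hilbert–Serre ring, then every strictly increasing chain 𝔭₀ ⊊ 𝔭₁ ⊊ ⋯ ⊊ 𝔭_r of homogeneous prime ideals of R has length r ≤ d(R); that is, the graded Krull dimension satisfies dim^gr(R) ≤ d(R). -/
open Finset Module

theorem Ideal.IsHomogeneous.exists_homogeneous_of_lt {ι σ A : Type*} [Semiring A]
    [DecidableEq ι] [AddMonoid ι] [SetLike σ A] [AddSubmonoidClass σ A] {𝒜 : ι → σ} [GradedRing 𝒜]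
    {𝔭 𝔮 : Ideal A} (h𝔮 : 𝔮.IsHomogeneous 𝒜) (h : 𝔭 < 𝔮) : ∃ n, ∃ x ∈ 𝒜 n, x ∈ 𝔮 ∧ x ∉ 𝔭 := by
  by_contra! hnone
  refine h.not_ge ?_
  rw [← h𝔮.toIdeal_homogeneousCore_eq_self]
  refine Ideal.span_le.2 ?_
  rintro _ ⟨⟨x, n, hn⟩, hx, rfl⟩
  exact hnone n x hn hx

open Polynomial in
theorem Polynomial.eq_zero_of_eval₂_mem {A R : Type*} [CommRing A] [CommRing R]
    {𝔭 𝔮 : Ideal R} [h𝔭 : 𝔭.IsPrime] (h𝔭𝔮 : 𝔭 ≤ 𝔮) {x : R} (hx𝔮 : x ∈ 𝔮) (hx𝔭 : x ∉ 𝔭)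
    {ψ : A →+* R} (hψ : ∀ c, ψ c ∈ 𝔮 → c = 0) {q : A[X]} (hq : q.eval₂ ψ x ∈ 𝔭) : q = 0 := by
  induction q using Polynomial.recOnHorner with
  | M0 => rfl
  | MC p a hp0 ha _ =>
    refine absurd (hψ a ?_) ha
    obtain ⟨p', rfl⟩ := X_dvd_iff.2 hp0
    have := h𝔭𝔮 hq
    rw [eval₂_add, eval₂_C, eval₂_mul, eval₂_X] at this
    exact (Ideal.add_mem_iff_right _ (Ideal.mul_mem_right _ _ hx𝔮)).1 this
  | MX p hp ih =>
    rw [eval₂_mul, eval₂_X] at hq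
    exact absurd (ih ((h𝔭.mem_or_mem hq).resolve_right hx𝔭)) hp

open MvPolynomial in
theorem MvPolynomial.aeval_eq_eval₂_finSuccEquiv {k R : Type*} [CommRing k] [CommRing R]
    [Algebra k R] {r : ℕ} (x : Fin (r + 1) → R) (p : MvPolynomial (Fin (r + 1)) k) :
    aeval x p = (finSuccEquiv k r p).eval₂ (aeval (Fin.tail x)).toRingHom (x 0) := by
  change (aeval x).toRingHom p =
    ((Polynomial.eval₂RingHom (aeval (Fin.tail x)).toRingHom (x 0)).comp
      (finSuccEquiv k r).toRingEquiv.toRingHom) p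
  congr 1
  refine ringHom_ext (fun a => ?_) (Fin.cases ?_ fun j => ?_) <;>
    simp [finSuccEquiv_apply, Fin.tail, Algebra.algebraMap_eq_smul_one]

open MvPolynomial in
theorem MvPolynomial.eq_zero_of_aeval_mem_of_chain {k R : Type*} [Field k] [CommRing R]
    [Algebra k R] {r : ℕ} {𝔭 : Fin (r + 1) → Ideal R} (hmono : Monotone 𝔭)
    (hprime : ∀ i, (𝔭 i).IsPrime) {x : Fin r → R} (hx𝔭 : ∀ i, x i ∈ 𝔭 i.succ)
    (hx𝔭' : ∀ i, x i ∉ 𝔭 i.castSucc) {p : MvPolynomial (Fin r) k} (hp : aeval x p ∈ 𝔭 0) :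
    p = 0 := by
  induction r with
  | zero =>
    obtain ⟨c, rfl⟩ := C_surjective _ p
    rw [aeval_C] at hp
    rw [C_eq_zero]
    by_contra hc
    exact (hprime 0).ne_top (Ideal.eq_top_of_isUnit_mem _ hp ((isUnit_iff_ne_zero.2 hc).map _))
  | succ r ih =>
    have hψ (c) (hc : aeval (Fin.tail x) c ∈ 𝔭 1) : c = 0 :=
      ih (hmono.comp Fin.strictMono_succ.monotone) (fun i => hprime _)
        (fun i => hx𝔭 i.succ)
        (fun i => by rw [Function.comp_apply, Fin.succ_castSucc]; exact hx𝔭' i.succ) hc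
    rw [aeval_eq_eval₂_finSuccEquiv] at hp
    exact (finSuccEquiv k r).map_eq_zero_iff.1 <| Polynomial.eq_zero_of_eval₂_mem
      (h𝔭 := hprime 0) (hmono (Fin.zero_le 1)) (hx𝔭 0) (hx𝔭' 0) hψ hp

theorem algebraicIndependent_of_chain {k R : Type*} [Field k] [CommRing R]
    [Algebra k R] {r : ℕ} {𝔭 : Fin (r + 1) → Ideal R} (hmono : Monotone 𝔭)
    (hprime : ∀ i, (𝔭 i).IsPrime) {x : Fin r → R} (hx𝔭 : ∀ i, x i ∈ 𝔭 i.succ)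
    (hx𝔭' : ∀ i, x i ∉ 𝔭 i.castSucc) : AlgebraicIndependent k x :=
  (injective_iff_map_eq_zero _).2 fun _ hp =>
    MvPolynomial.eq_zero_of_aeval_mem_of_chain hmono hprime hx𝔭 hx𝔭' (hp ▸ Ideal.zero_mem _)

theorem AlgebraicIndependent.linearIndependent_prod_pow {k R ι : Type*} [CommRing k]
    [CommRing R] [Algebra k R] [Fintype ι] {x : ι → R} (hx : AlgebraicIndependent k x) :
    LinearIndependent k (fun a : ι → ℕ => ∏ i, x i ^ a i) := by
  have := ((MvPolynomial.basisMonomials ι k).linearIndependent.map'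
    (MvPolynomial.aeval x).toLinearMap (LinearMap.ker_eq_bot.2 hx)).comp _
    Finsupp.equivFunOnFinite.symm.injective
  simpa [Function.comp_def, MvPolynomial.aeval_monomial, Finsupp.prod_fintype] using this

section Counting

variable {k R ι : Type*} [Field k] [CommRing R] [Algebra k R] [Fintype ι]
  (𝒜 : ℕ → Submodule k R) [SetLike.GradedMonoid 𝒜] [∀ N, FiniteDimensional k (𝒜 N)]
  {x : ι → R} {n : ι → ℕ}

theorem card_le_finrank_of_weightedDegree_eq (hx𝒜 : ∀ i, x i ∈ 𝒜 (n i))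
    (hx : LinearIndependent k (fun a : ι → ℕ => ∏ i, x i ^ a i)) {N : ℕ} {S : Finset (ι → ℕ)}
    (hS : ∀ a ∈ S, ∑ i, a i * n i = N) : #S ≤ finrank k (𝒜 N) := by
  have hspan : Submodule.span k (Set.range fun a : S => ∏ i, x i ^ a.1 i) ≤ 𝒜 N := by
    rw [Submodule.span_le]
    rintro _ ⟨⟨a, ha⟩, rfl⟩
    simpa [hS a ha] using SetLike.prod_pow_mem_graded 𝒜 n x a (fun i _ => hx𝒜 i) (F := univ)
  calc #S = finrank k (Submodule.span k (Set.range fun a : S => ∏ i, x i ^ a.1 i)) :=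
        ((finrank_span_eq_card (hx.comp _ Subtype.val_injective)).trans (Fintype.card_coe S)).symm
    _ ≤ finrank k (𝒜 N) := Submodule.finrank_mono hspan

theorem pow_le_sum_finrank_of_linearIndependent (hx𝒜 : ∀ i, x i ∈ 𝒜 (n i))
    (hx : LinearIndependent k (fun a : ι → ℕ => ∏ i, x i ^ a i)) (K : ℕ) :
    (K + 1) ^ Fintype.card ι ≤ ∑ N ∈ range ((∑ i, n i) * K + 1), finrank k (𝒜 N) := by
  classical
  have hdeg : ∀ a ∈ Fintype.piFinset fun _ : ι => range (K + 1),
      ∑ i, a i * n i ∈ range ((∑ i, n i) * K + 1) := by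
    intro a ha
    simp only [Fintype.mem_piFinset, mem_range, Nat.lt_succ_iff] at ha ⊢
    calc ∑ i, a i * n i ≤ ∑ i, K * n i := sum_le_sum fun i _ => Nat.mul_le_mul_right _ (ha i)
      _ = (∑ i, n i) * K := by rw [← mul_sum, mul_comm]
  calc (K + 1) ^ Fintype.card ι = #(Fintype.piFinset fun _ : ι => range (K + 1)) := by simp
    _ = ∑ N ∈ range ((∑ i, n i) * K + 1),
          #{a ∈ Fintype.piFinset fun _ : ι => range (K + 1) | ∑ i, a i * n i = N} :=
        card_eq_sum_card_fiberwise hdeg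
    _ ≤ ∑ N ∈ range ((∑ i, n i) * K + 1), finrank k (𝒜 N) :=
        sum_le_sum fun N _ =>
          card_le_finrank_of_weightedDegree_eq 𝒜 hx𝒜 hx fun a ha => (mem_filter.1 ha).2

end Counting

theorem pow_mul_sum_range_le_tsum {f : ℕ → ℝ} (hf : ∀ n, 0 ≤ f n) {t : ℝ} (ht₀ : 0 ≤ t)
    (ht₁ : t ≤ 1) (hsum : Summable fun n => f n * t ^ n) (M : ℕ) :
    t ^ M * ∑ n ∈ range (M + 1), f n ≤ ∑' n, f n * t ^ n :=
  calc t ^ M * ∑ n ∈ range (M + 1), f n = ∑ n ∈ range (M + 1), f n * t ^ M := by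
        rw [mul_sum]; exact sum_congr rfl fun n _ => mul_comm _ _
    _ ≤ ∑ n ∈ range (M + 1), f n * t ^ n :=
        sum_le_sum fun n hn => mul_le_mul_of_nonneg_left
          (pow_le_pow_of_le_one ht₀ ht₁ (mem_range_succ_iff.1 hn)) (hf n)
    _ ≤ ∑' n, f n * t ^ n := hsum.sum_le_tsum _ fun n _ => mul_nonneg (hf n) (pow_nonneg ht₀ n)

theorem one_half_le_one_sub_inv_pow (M : ℕ) : (1 / 2 : ℝ) ≤ (1 - (2 * (M + 1 : ℝ))⁻¹) ^ M := by
  have hMε : (M : ℝ) * (2 * (M + 1 : ℝ))⁻¹ ≤ 1 / 2 := by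
    rw [← div_eq_mul_inv, div_le_iff₀ (by positivity)]
    linarith
  have hε : (2 * (M + 1 : ℝ))⁻¹ ≤ 1 / 2 := by
    rw [inv_le_comm₀ (by positivity) (by norm_num)]
    linarith [(M.cast_nonneg : (0 : ℝ) ≤ M)]
  have := one_add_mul_le_pow (a := -(2 * (M + 1 : ℝ))⁻¹) (by linarith) M
  rw [← sub_eq_add_neg] at this
  linarith

theorem HSBound.exists_sum_range_le {F : ℕ → ℕ} {d : ℕ} (h : HSBound F d) :
    ∃ B > 0, ∀ M : ℕ, (∑ N ∈ range (M + 1), F N : ℝ) ≤ B * (M + 1) ^ d := by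
  obtain ⟨C, hC, hbound⟩ := h
  refine ⟨2 * C * 2 ^ d, by positivity, fun M => ?_⟩
  set ε : ℝ := (2 * (M + 1 : ℝ))⁻¹
  have hε : 0 < ε := by positivity
  have hε₁ : ε < 1 := inv_lt_one_of_one_lt₀ (by linarith [(M.cast_nonneg : (0 : ℝ) ≤ M)])
  obtain ⟨hsum, hle⟩ := hbound (1 - ε) ⟨by linarith, by linarith⟩
  rw [sub_sub_cancel] at hle
  have hlow := pow_mul_sum_range_le_tsum (fun N => (F N).cast_nonneg) (by linarith) (by linarith)
    hsum M
  have hS : 0 ≤ ∑ N ∈ range (M + 1), (F N : ℝ) := sum_nonneg fun N _ => (F N).cast_nonneg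
  have hε_inv : ε ^ d * (2 * (M + 1 : ℝ)) ^ d = 1 := by
    rw [← mul_pow, inv_mul_cancel₀ (by positivity), one_pow]
  calc ∑ N ∈ range (M + 1), (F N : ℝ)
      ≤ 2 * ((1 - ε) ^ M * ∑ N ∈ range (M + 1), (F N : ℝ)) := by
        nlinarith [one_half_le_one_sub_inv_pow M]
    _ ≤ 2 * ∑' N, (F N : ℝ) * (1 - ε) ^ N := by linarith
    _ = 2 * (ε ^ d * ∑' N, (F N : ℝ) * (1 - ε) ^ N) * (2 * (M + 1 : ℝ)) ^ d := by
        linear_combination (-2 * ∑' N, (F N : ℝ) * (1 - ε) ^ N) * hε_inv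
    _ ≤ 2 * C * (2 * (M + 1 : ℝ)) ^ d := by gcongr
    _ = 2 * C * 2 ^ d * (M + 1) ^ d := by rw [mul_pow]; ring

theorem le_of_forall_pow_le_mul_pow {r d : ℕ} {B : ℝ}
    (h : ∀ K : ℕ, ((K : ℝ) + 1) ^ r ≤ B * ((K : ℝ) + 1) ^ d) : r ≤ d := by
  by_contra! hdr
  have hK := h ⌈B⌉₊
  have hpos : (0 : ℝ) < ((⌈B⌉₊ : ℝ) + 1) ^ d := by positivity
  have : ((⌈B⌉₊ : ℝ) + 1) ^ (d + 1) ≤ B * ((⌈B⌉₊ : ℝ) + 1) ^ d :=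
    (pow_le_pow_right₀ (by linarith [(⌈B⌉₊.cast_nonneg : (0 : ℝ) ≤ _)]) hdr).trans hK
  rw [pow_succ, mul_comm B] at this
  linarith [le_of_mul_le_mul_left this hpos, Nat.le_ceil B]

theorem gradedKrullDim_le_hsDim_general {k R : Type*} [Field k] [CommRing R] [Algebra k R]
    (𝒜 : ℕ → Submodule k R) [GradedAlgebra 𝒜]
    (hHS : IsHilbertSerre 𝒜) :
    ∀ (r : ℕ) (𝔭 : Fin (r + 1) → Ideal R), StrictMono 𝔭 →
      (∀ i, (𝔭 i).IsPrime) → (∀ i, (𝔭 i).IsHomogeneous 𝒜) → r ≤ hsDim 𝒜 := by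
  intro r 𝔭 hmono hprime hhom
  obtain ⟨hfin, hne⟩ := hHS
  refine le_csInf hne fun d hd => ?_
  have hgap (i : Fin r) : ∃ n, ∃ x ∈ 𝒜 n, x ∈ 𝔭 i.succ ∧ x ∉ 𝔭 i.castSucc :=
    (hhom i.succ).exists_homogeneous_of_lt (hmono Fin.castSucc_lt_succ)
  choose n x hx𝒜 hx𝔭 hx𝔭' using hgap
  have hind := (algebraicIndependent_of_chain (k := k) hmono.monotone hprime hx𝔭
    hx𝔭').linearIndependent_prod_pow
  obtain ⟨B, hB, hsum⟩ := hd.exists_sum_range_le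
  set s := ∑ i, n i
  refine le_of_forall_pow_le_mul_pow (B := B * (s + 1) ^ d) fun K => ?_
  have hcount : ((K : ℝ) + 1) ^ r ≤ ∑ N ∈ range (s * K + 1), (finrank k (𝒜 N) : ℝ) := by
    exact_mod_cast Fintype.card_fin r ▸ pow_le_sum_finrank_of_linearIndependent 𝒜 hx𝒜 hind K
  calc ((K : ℝ) + 1) ^ r ≤ B * ((s * K : ℕ) + 1 : ℝ) ^ d := hcount.trans (hsum (s * K))
    _ ≤ B * ((s + 1) * (K + 1)) ^ d := by gcongr; push_cast; nlinarith
    _ = B * (s + 1) ^ d * (K + 1) ^ d := by rw [mul_pow, mul_assoc]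

/-- for a Hilbert–Serre ring `R`, every strictly increasing chain of
homogeneous prime ideals has length at most `d(R)`; i.e. `dim^gr(R) ≤ d(R)`. -/
theorem gradedKrullDim_le_hsDim {k R : Type*} [Field k] [CommRing R] [Algebra k R]
    (𝒜 : ℕ → Submodule k R) [GradedAlgebra 𝒜] (h0 : 𝒜 0 = 1)
    (hHS : IsHilbertSerre 𝒜) :
    ∀ (r : ℕ) (𝔭 : Fin (r + 1) → Ideal R), StrictMono 𝔭 →
      (∀ i, (𝔭 i).IsPrime) → (∀ i, (𝔭 i).IsHomogeneous 𝒜) → r ≤ hsDim 𝒜 :=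
  gradedKrullDim_le_hsDim_general 𝒜 hHS
end

section
/- Let k be a field and R a commutative integral domain that is a k-algebra (so k embeds into R). Then the Krull dimension of R is at most the transcendence degree of R over k: ringKrullDim R ≤ Algebra.trdeg k R. -/
/-- The transcendence degree of a commutative `k`-algebra `R`: the supremum of the
cardinalities of subsets of `R` that are algebraically independent over `k`. -/
noncomputable def trdeg (k : Type*) {R : Type*} [CommRing k] [CommRing R] [Algebra k R] :
    Cardinal :=
  ⨆ s : {s : Set R // AlgebraicIndependent k ((↑) : s → R)}, Cardinal.mk s.1

open MvPolynomial in
/-- Key lemma: if `v` has algebraically independent image modulo a prime `q`, and `x` is a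
nonzero element of `q`, then `Fin.cons x v` is algebraically independent. -/
theorem algIndep_cons_of_quotient {k R : Type*} [Field k] [CommRing R] [IsDomain R]
    [Algebra k R] (q : Ideal R) {x : R} (hxq : x ∈ q) (hx0 : x ≠ 0)
    {n : ℕ} {v : Fin n → R}
    (hv : AlgebraicIndependent k (fun i => Ideal.Quotient.mk q (v i))) :
    AlgebraicIndependent k (Fin.cons x v : Fin (n + 1) → R) := by
  classical
  rw [algebraicIndependent_iff]
  -- evaluation identity
  have heval : ∀ P : MvPolynomial (Fin (n + 1)) k,
      aeval (Fin.cons x v : Fin (n + 1) → R) P =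
        Polynomial.eval x (Polynomial.map ((aeval v : MvPolynomial (Fin n) k →ₐ[k] R) : MvPolynomial (Fin n) k →+* R)
          (finSuccEquiv k n P)) := by
    intro P
    have : (aeval (Fin.cons x v : Fin (n + 1) → R) : MvPolynomial (Fin (n + 1)) k →ₐ[k] R) =
        ((Polynomial.aeval x : Polynomial R →ₐ[R] R).restrictScalars k).comp
          ((Polynomial.mapAlgHom (aeval v : MvPolynomial (Fin n) k →ₐ[k] R)).comp
            (finSuccEquiv k n).toAlgHom) := by
      apply MvPolynomial.algHom_ext
      intro i
      refine Fin.cases ?_ ?_ i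
      · simp [finSuccEquiv_X_zero]
      · intro j
        simp [finSuccEquiv_X_succ]
    calc aeval (Fin.cons x v : Fin (n + 1) → R) P
        = ((Polynomial.aeval x : Polynomial R →ₐ[R] R).restrictScalars k)
            ((Polynomial.mapAlgHom (aeval v : MvPolynomial (Fin n) k →ₐ[k] R))
              ((finSuccEquiv k n) P)) := by rw [this]; rfl
      _ = Polynomial.eval x (Polynomial.map ((aeval v : MvPolynomial (Fin n) k →ₐ[k] R) : MvPolynomial (Fin n) k →+* R)
            (finSuccEquiv k n P)) := by
          simp only [AlgHom.coe_restrictScalars', Polynomial.coe_aeval_eq_eval,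
            Polynomial.mapAlgHom, AlgHom.coe_mk, RingHom.coe_mk, MonoidHom.coe_mk,
            OneHom.coe_mk, Polynomial.coe_mapRingHom]
          rfl
  -- from membership of the evaluation in q, deduce vanishing of the polynomial
  have hker : ∀ a : MvPolynomial (Fin n) k, (aeval v) a ∈ q → a = 0 := by
    intro a ha
    refine algebraicIndependent_iff.1 hv a ?_
    have h1 := MvPolynomial.comp_aeval_apply (Ideal.Quotient.mkₐ k q) a (f := v)
    simp only [Ideal.Quotient.mkₐ_eq_mk] at h1
    rw [← h1]
    exact (Ideal.Quotient.eq_zero_iff_mem).2 ha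
  -- main induction on polynomial degree
  have main : ∀ (N : ℕ) (Q : Polynomial (MvPolynomial (Fin n) k)), Q.natDegree ≤ N →
      Polynomial.eval x (Polynomial.map ((aeval v : MvPolynomial (Fin n) k →ₐ[k] R) : MvPolynomial (Fin n) k →+* R) Q) = 0 →
      Q = 0 := by
    intro N
    induction N with
    | zero =>
      intro Q hdeg hQ
      rw [Polynomial.eq_C_of_natDegree_eq_zero (Nat.le_zero.1 hdeg)] at hQ ⊢
      rw [Polynomial.map_C, Polynomial.eval_C] at hQ
      have hmem : (aeval v) (Q.coeff 0) ∈ q := by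
        rw [show (aeval v) (Q.coeff 0) = 0 from hQ]; exact q.zero_mem
      rw [hker _ hmem, map_zero]
    | succ N ih =>
      intro Q hdeg hQ
      have hsplit := Polynomial.divX_mul_X_add Q
      rw [← hsplit, Polynomial.map_add, Polynomial.map_mul, Polynomial.map_X,
        Polynomial.map_C, Polynomial.eval_add, Polynomial.eval_mul, Polynomial.eval_X,
        Polynomial.eval_C] at hQ
      have hc0 : Q.coeff 0 = 0 := by
        refine hker _ ?_
        show ((aeval v : MvPolynomial (Fin n) k →ₐ[k] R) : MvPolynomial (Fin n) k →+* R)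
          (Q.coeff 0) ∈ q
        have : ((aeval v : MvPolynomial (Fin n) k →ₐ[k] R) : MvPolynomial (Fin n) k →+* R) (Q.coeff 0) =
            - (Polynomial.eval x (Polynomial.map ((aeval v : MvPolynomial (Fin n) k →ₐ[k] R) : MvPolynomial (Fin n) k →+* R)
              Q.divX) * x) := by linear_combination hQ
        rw [this]
        exact q.neg_mem (q.mul_mem_left _ hxq)
      have hdivX : Q.divX = 0 := by
        apply ih _ (by
          have h3 : Q.divX.natDegree = Q.natDegree - 1 :=
            Polynomial.natDegree_divX_eq_natDegree_tsub_one
          omega)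
        have hmul : Polynomial.eval x (Polynomial.map
            ((aeval v : MvPolynomial (Fin n) k →ₐ[k] R) : MvPolynomial (Fin n) k →+* R) Q.divX) * x = 0 := by
          rw [hc0, map_zero, add_zero] at hQ
          exact hQ
        rcases mul_eq_zero.1 hmul with h | h
        · exact h
        · exact absurd h hx0
      rw [← hsplit, hdivX, hc0, map_zero, zero_mul, add_zero]
  intro P hP
  rw [heval] at hP
  have := main (finSuccEquiv k n P).natDegree _ le_rfl hP
  exact (map_eq_zero_iff _ (finSuccEquiv k n).injective).1 this

/-- A strict chain of `n + 1` prime ideals in a domain over `k` yields `n` algebraically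
independent elements. -/
theorem exists_algIndep_of_chain (k : Type*) [Field k] : ∀ (n : ℕ) (R : Type*) [CommRing R]
    [IsDomain R] [Algebra k R] (p : Fin (n + 1) → Ideal R), (∀ i, (p i).IsPrime) →
    StrictMono p → ∃ f : Fin n → R, AlgebraicIndependent k f := by
  intro n
  induction n with
  | zero =>
    intro R _ _ _ p hp hmono
    exact ⟨Fin.elim0, algebraicIndependent_empty_type_iff.2 (algebraMap k R).injective⟩
  | succ n ih =>
    intro R _ _ _ p hp hmono
    set q : Ideal R := p (Fin.succ 0) with hq
    haveI : q.IsPrime := hp _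
    -- nonzero element of q
    obtain ⟨x, hxq, hxn⟩ : ∃ x, x ∈ q ∧ x ∉ p 0 := by
      have := hmono (show (0 : Fin (n + 2)) < Fin.succ 0 from Fin.succ_pos 0)
      exact Set.exists_of_ssubset this
    have hx0 : x ≠ 0 := fun h => hxn (h ▸ (p 0).zero_mem)
    -- chain in the quotient
    have hle : ∀ i : Fin (n + 1), q ≤ p i.succ := fun i =>
      hmono.monotone (Fin.succ_le_succ_iff.2 (Fin.zero_le i))
    set p' : Fin (n + 1) → Ideal (R ⧸ q) :=
      fun i => (p i.succ).map (Ideal.Quotient.mk q) with hp'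
    have hp'prime : ∀ i, (p' i).IsPrime := fun i =>
      Ideal.map_isPrime_of_surjective Ideal.Quotient.mk_surjective
        (by rw [Ideal.mk_ker]; exact hle i)
    have hp'mono : StrictMono p' := by
      intro i j hij
      refine lt_of_le_of_ne (Ideal.map_mono (hmono.monotone (Fin.succ_le_succ_iff.2 hij.le))) ?_
      intro heq
      have hcom : ∀ m : Fin (n + 1), Ideal.comap (Ideal.Quotient.mk q) (p' m) = p m.succ := by
        intro m
        rw [hp', Ideal.comap_map_of_surjective _ Ideal.Quotient.mk_surjective,
          ← RingHom.ker_eq_comap_bot, Ideal.mk_ker, sup_eq_left.2 (hle m)]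
      have : p i.succ = p j.succ := by rw [← hcom i, ← hcom j, heq]
      exact (hmono (Fin.succ_lt_succ_iff.2 hij)).ne this
    obtain ⟨g, hg⟩ := ih (R ⧸ q) p' hp'prime hp'mono
    -- lift g
    choose v hv using fun i => Ideal.Quotient.mk_surjective (g i)
    have hg' : AlgebraicIndependent k (fun i => Ideal.Quotient.mk q (v i)) := by
      convert hg using 1
      funext i
      exact hv i
    exact ⟨Fin.cons x v, algIndep_cons_of_quotient q hxq hx0 hg'⟩

/-- for an integral domain `R` containing a field `k`, the Krull dimension
of `R` is at most the transcendence degree of `R` over `k`. -/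
theorem krullDim_le_trdeg (k R : Type*) [Field k] [CommRing R] [IsDomain R] [Algebra k R] :
    ringKrullDim R ≤ ((Cardinal.toENat (trdeg k (R := R)) : ℕ∞) : WithBot ℕ∞) := by
  rw [ringKrullDim, Order.krullDim]
  apply iSup_le
  intro c
  have hchain : ∃ f : Fin c.length → R, AlgebraicIndependent k f := by
    apply exists_algIndep_of_chain k c.length R (fun i => (c.toFun i).asIdeal)
      (fun i => (c.toFun i).isPrime)
    intro i j hij
    exact c.strictMono hij
  obtain ⟨f, hf⟩ := hchain
  have hinj : Function.Injective f := hf.injective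
  have hsub : AlgebraicIndependent k ((↑) : Set.range f → R) := hf.to_subtype_range
  have hcard : (c.length : Cardinal) ≤ trdeg k (R := R) := by
    have h1 : (c.length : Cardinal) = Cardinal.mk (Set.range f) := by
      have h2 := Cardinal.mk_range_eq_of_injective hinj
      rw [Cardinal.mk_fin, Cardinal.lift_natCast, Cardinal.lift_uzero] at h2
      exact h2.symm
    rw [h1]
    exact le_ciSup (Cardinal.bddAbove_range _)
      (⟨Set.range f, hsub⟩ : {s : Set R // AlgebraicIndependent k ((↑) : s → R)})
  have : (c.length : ℕ∞) ≤ Cardinal.toENat (trdeg k (R := R)) :=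
    Cardinal.natCast_le_toENat_iff.2 hcard
  rw [← WithBot.coe_natCast]
  exact WithBot.coe_le_coe.2 this
end

section
/- Let n ∈ ℕ, let M be a submonoid of ℕⁿ (under addition), and let G be the subgroup of ℤⁿ generated by the image of M, with m = rank of G as a free abelian group. Then there exists a constant C > 0 such that for every N ≥ 1, the number of elements α ∈ M with α₁ + ⋯ + αₙ ≤ N is at most C·N^m. -/
/-!
The coordinate functionals of `ℚⁿ`, restricted to the `ℚ`-span `W` of `G`, span the dual of `W`,
so at most `m = dim W` of them, indexed by `S`, already separate the points of `W`. Hence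
`α ↦ (αᵢ)_{i ∈ S}` is injective on `M`, and it maps the `α` with `|α| ≤ N` into the box
`{0, …, N}^S`, which has `(N + 1)^|S| ≤ (2N)^m` elements.
-/

open Module Submodule

theorem Submodule.exists_card_le_finrank_injOn_restrict {K ι : Type*} [Field K] [Fintype ι]
    (W : Submodule K (ι → K)) :
    ∃ S : Finset ι, S.card ≤ finrank K W ∧ Set.InjOn S.restrict (W : Set (ι → K)) := by
  classical
  let coord : ι → Dual K W := fun i => (LinearMap.proj i).comp W.subtype
  obtain ⟨T, -, -, hspan, hli⟩ :=
    exists_linearIndepOn_extension (linearIndepOn_empty K coord) (Set.empty_subset Set.univ)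
  refine ⟨T.toFinset, ?_, ?_⟩
  · rw [← Subspace.dual_finrank_eq, Set.toFinset_card]
    exact hli.linearIndependent.fintype_card_le_finrank
  · intro v hv w hw hvw
    -- every coordinate is a combination of those in `T`, all of which vanish at `v - w`
    have hker : span K (coord '' T) ≤ LinearMap.ker (Dual.eval K W ⟨v - w, W.sub_mem hv hw⟩) := by
      rw [span_le]
      rintro _ ⟨i, hi, rfl⟩
      have := congrFun hvw ⟨i, Set.mem_toFinset.mpr hi⟩
      simp_all [coord]
    funext i
    have := hker (hspan ⟨i, Set.mem_univ i, rfl⟩)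
    simpa [coord, sub_eq_zero] using this

theorem Submodule.exists_card_le_finrank_injOn_restrict_of_free {R ι : Type*} [CommRing R]
    [IsDomain R] [Fintype ι] (G : Submodule R (ι → R)) [Module.Free R G] [Module.Finite R G] :
    ∃ S : Finset ι, S.card ≤ finrank R G ∧ Set.InjOn S.restrict (G : Set (ι → R)) := by
  let K := FractionRing R
  let L : (ι → R) →ₗ[R] (ι → K) := LinearMap.compLeft (Algebra.linearMap R K) ι
  let b := Module.Free.chooseBasis R G
  let W : Submodule K (ι → K) := span K (Set.range fun j => L (b j))
  obtain ⟨S, hSW, hinj⟩ := W.exists_card_le_finrank_injOn_restrict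
  have hWG : finrank K W ≤ finrank R G :=
    (finrank_range_le_card _).trans (finrank_eq_card_chooseBasisIndex R G).ge
  have hLG : ∀ x : G, L x ∈ W := by
    intro x
    rw [← b.sum_repr x]
    simp only [coe_sum, coe_smul, map_sum, map_smul]
    exact sum_mem fun j _ => smul_of_tower_mem _ _ (subset_span ⟨j, rfl⟩)
  refine ⟨S, hSW.trans hWG, fun v hv w hw hvw => ?_⟩
  have hLvw : L v = L w := hinj (hLG ⟨v, hv⟩) (hLG ⟨w, hw⟩) <| funext fun i =>
    congrArg (algebraMap R K) (congrFun hvw i)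
  funext i
  exact IsFractionRing.injective R K (congrFun hLvw i)

theorem Set.ncard_le_pow_of_injOn_restrict {ι : Type*} [Fintype ι] {A : Set (ι → ℕ)}
    {S : Finset ι} {N : ℕ} (hinj : Set.InjOn S.restrict A) (hA : ∀ α ∈ A, ∀ i ∈ S, α i ≤ N) :
    A.ncard ≤ (N + 1) ^ S.card := by
  classical
  let box : Finset (S → ℕ) := Fintype.piFinset fun _ => Finset.range (N + 1)
  have hbox : box.card = (N + 1) ^ S.card := by simp [box, Fintype.card_piFinset]
  calc A.ncard ≤ (box : Set (S → ℕ)).ncard :=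
        Set.ncard_le_ncard_of_injOn _ (fun α hα => by
          simpa [box, Nat.lt_succ_iff] using fun i hi => hA α hα i hi) hinj
    _ = (N + 1) ^ S.card := by rw [Set.ncard_coe_finset, hbox]

/-- let `M` be a submonoid of `ℕⁿ` and `G` the subgroup of `ℤⁿ` it
generates (its Grothendieck group), of rank `m`.  Then the number of `α ∈ M` with
`α₁ + ⋯ + αₙ ≤ N` is at most `C · N^m` for some constant `C > 0`. -/
theorem card_le_of_rank (n : ℕ) (M : AddSubmonoid (Fin n → ℕ))
    (m : ℕ)
    (hm : m = Module.finrank ℤ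
      ↥(Submodule.span ℤ ((fun α : Fin n → ℕ => fun i => (α i : ℤ)) '' (M : Set (Fin n → ℕ))))) :
    ∃ C : ℝ, 0 < C ∧ ∀ N : ℕ, 1 ≤ N →
      (({α : Fin n → ℕ | α ∈ M ∧ ∑ i, α i ≤ N}.ncard : ℝ)) ≤ C * (N : ℝ) ^ m := by
  set toInt : (Fin n → ℕ) → (Fin n → ℤ) := fun α i => (α i : ℤ)
  obtain ⟨S, hSm, hinj⟩ := (span ℤ (toInt '' M)).exists_card_le_finrank_injOn_restrict_of_free
  have hinjM : Set.InjOn S.restrict (M : Set (Fin n → ℕ)) := by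
    intro α hα β hβ hαβ
    have := hinj (subset_span ⟨α, hα, rfl⟩) (subset_span ⟨β, hβ, rfl⟩) <| funext fun i =>
      congrArg Nat.cast (congrFun hαβ i)
    funext i
    exact Nat.cast_injective (congrFun this i)
  refine ⟨2 ^ m, by positivity, fun N hN => ?_⟩
  have hcard := Set.ncard_le_pow_of_injOn_restrict (A := {α | α ∈ M ∧ ∑ i, α i ≤ N})
    (hinjM.mono fun α hα => hα.1) fun α hα i _ =>
      (Finset.single_le_sum (fun j _ => Nat.zero_le (α j)) (Finset.mem_univ i)).trans hα.2
  calc (({α : Fin n → ℕ | α ∈ M ∧ ∑ i, α i ≤ N}.ncard : ℝ)) ≤ ((N + 1) ^ S.card : ℕ) := by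
        exact_mod_cast hcard
    _ ≤ ((2 * N) ^ m : ℕ) := by
        exact_mod_cast (Nat.pow_le_pow_left (by omega) _).trans
          (Nat.pow_le_pow_right (by omega) (hm ▸ hSm))
    _ = 2 ^ m * (N : ℝ) ^ m := by push_cast; ring
end

section
/- Let k be a field and A a commutative integral domain that is a k-algebra. Let R be the subring of the polynomial ring A[X] given by R = { f ∈ A[X] : f.coeff 0 ∈ algebraMap k A '' univ }, i.e., R = k + X·A[X], graded by R₀ = k·1 and R_n = A·Xⁿ for n ≥ 1. Let 𝔪 = { f ∈ R : f.coeff 0 = 0 } = X·A[X], the maximal homogeneous ideal of R. Then the map sending a prime ideal 𝔭 of A to P_𝔭 = { f ∈ R : f.coeff 0 = 0 and f.coeff i ∈ 𝔭 for all i ≥ 1 } is a bijection from Spec(A) onto the set of homogeneous prime ideals of R different from 𝔪, and it preserves and reflects inclusions: 𝔭 ⊆ 𝔮 if and only if P_𝔭 ⊆ P_𝔮. In particular each P_𝔭 is a homogeneous prime ideal of R with P_𝔭 ⊊ 𝔪. -/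
set_option maxHeartbeats 1000000
set_option synthInstance.maxHeartbeats 400000

open Polynomial in
/-- The subring `R = k + X·A[X]` of the polynomial ring `A[X]`: the polynomials whose
constant term lies in the image of `k`. -/
def kPlusX (k A : Type*) [CommRing k] [CommRing A] [Algebra k A] : Subring (Polynomial A) where
  carrier := {f | f.coeff 0 ∈ (algebraMap k A).range}
  mul_mem' := by
    intro a b ha hb
    simpa only [Set.mem_setOf_eq, Polynomial.mul_coeff_zero] using mul_mem ha hb
  one_mem' := by
    simpa only [Set.mem_setOf_eq, Polynomial.coeff_one_zero] using one_mem (algebraMap k A).range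
  add_mem' := by
    intro a b ha hb
    simpa only [Set.mem_setOf_eq, Polynomial.coeff_add] using add_mem ha hb
  zero_mem' := by
    simpa only [Set.mem_setOf_eq, Polynomial.coeff_zero] using zero_mem (algebraMap k A).range
  neg_mem' := by
    intro a ha
    simpa only [Set.mem_setOf_eq, Polynomial.coeff_neg] using neg_mem ha

/-- An ideal `I` of `R = k + X·A[X]` is *homogeneous* if together with any element it
contains all its homogeneous components `(coeff i f)·Xⁱ` (which all lie in `R`). -/
def IsHomog {k A : Type*} [CommRing k] [CommRing A] [Algebra k A]
    (I : Ideal (kPlusX k A)) : Prop :=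
  ∀ f ∈ I, ∀ i : ℕ, ∀ g : kPlusX k A,
    (g : Polynomial A) = Polynomial.C ((f : Polynomial A).coeff i) * Polynomial.X ^ i → g ∈ I


variable (k A : Type*) [CommRing k] [CommRing A] [Algebra k A]

/-- The irrelevant ideal `𝔪 = X·A[X] = ⨁_{n ≥ 1} A·Xⁿ` of `R = k + X·A[X]`: the elements
with vanishing constant term. -/
def mIdeal : Ideal (kPlusX k A) where
  carrier := {f | (f : Polynomial A).coeff 0 = 0}
  add_mem' := by
    intro a b ha hb
    simp only [Set.mem_setOf_eq] at *
    rw [Subring.coe_add, Polynomial.coeff_add, ha, hb, add_zero]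
  zero_mem' := by
    simp only [Set.mem_setOf_eq, ZeroMemClass.coe_zero, Polynomial.coeff_zero]
  smul_mem' := by
    intro c f hf
    simp only [Set.mem_setOf_eq, smul_eq_mul] at *
    rw [Subring.coe_mul, Polynomial.mul_coeff_zero, hf, mul_zero]

/-- For a prime (or any) ideal `𝔭` of `A`, the ideal
`P_𝔭 = { f ∈ R : coeff 0 f = 0 and coeff i f ∈ 𝔭 for all i ≥ 1 }` of `R = k + X·A[X]`. -/
def Pideal (𝔭 : Ideal A) : Ideal (kPlusX k A) where
  carrier := {f | (f : Polynomial A).coeff 0 = 0 ∧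
    ∀ i : ℕ, 1 ≤ i → (f : Polynomial A).coeff i ∈ 𝔭}
  add_mem' := by
    intro a b ha hb
    refine ⟨?_, fun i hi => ?_⟩
    · rw [Subring.coe_add, Polynomial.coeff_add, ha.1, hb.1, add_zero]
    · rw [Subring.coe_add, Polynomial.coeff_add]
      exact Ideal.add_mem 𝔭 (ha.2 i hi) (hb.2 i hi)
  zero_mem' := by
    refine ⟨?_, fun i hi => ?_⟩ <;>
      simp only [ZeroMemClass.coe_zero, Polynomial.coeff_zero, Submodule.zero_mem]
  smul_mem' := by
    intro c f hf
    refine ⟨?_, fun i hi => ?_⟩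
    · rw [smul_eq_mul, Subring.coe_mul, Polynomial.mul_coeff_zero, hf.1, mul_zero]
    · rw [smul_eq_mul, Subring.coe_mul, Polynomial.coeff_mul]
      refine Ideal.sum_mem 𝔭 fun x hx => ?_
      rcases Nat.eq_zero_or_pos x.2 with h2 | h2
      · rw [h2, hf.1, mul_zero]
        exact 𝔭.zero_mem
      · exact Ideal.mul_mem_left 𝔭 _ (hf.2 x.2 h2)

/-! A proper homogeneous ideal `Q` of `k + X·A[X]` contains no nonzero constant of `k`, these
being units, so `Q ⊆ 𝔪`. If `Q` is prime and `X ∈ Q`, then `(a·X)² = X·(a²·X) ∈ Q` forces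
`𝔪 ⊆ Q`; so for `Q ≠ 𝔪` we have `X ∉ Q`, and cancelling powers of `X` shows that whether
`a·Xⁿ ∈ Q` does not depend on `n ≥ 1`. Hence `𝔭 = {a | a·X ∈ Q}` is a prime of `A`, and
`Q = P_𝔭` because `Q` is spanned by its homogeneous elements. Conversely `P_𝔭` is the contraction
of the prime `𝔭[X]` of `A[X]`, since a constant of `k` lying in the proper ideal `𝔭` is zero. -/

lemma eq_zero_of_map_mem_of_ne_top {K R : Type*} [DivisionRing K] [Semiring R]
    (φ : K →+* R) {I : Ideal R} (hI : I ≠ ⊤) {x : K} (hx : φ x ∈ I) : x = 0 := by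
  by_contra h
  exact hI (I.eq_top_of_isUnit_mem hx ((IsUnit.mk0 x h).map φ))

namespace kPlusX

open Polynomial

section CommRing

variable {k A : Type*} [CommRing k] [CommRing A] [Algebra k A]

lemma mem_Pideal {I : Ideal A} {f : kPlusX k A} :
    f ∈ Pideal k A I ↔ (f : A[X]).coeff 0 = 0 ∧ ∀ i, 1 ≤ i → (f : A[X]).coeff i ∈ I :=
  Iff.rfl

lemma mem_mIdeal {f : kPlusX k A} : f ∈ mIdeal k A ↔ (f : A[X]).coeff 0 = 0 :=
  Iff.rfl

variable (A) in
noncomputable def constHom : k →+* kPlusX k A :=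
  (algebraMap k A[X]).codRestrict (kPlusX k A) fun x => by
    show _ ∈ (algebraMap k A).range
    simp [Polynomial.algebraMap_apply]

@[simp] lemma coe_constHom (x : k) : (constHom A x : A[X]) = C (algebraMap k A x) :=
  Polynomial.algebraMap_apply x

variable (k) in
/-- The exponent is `n + 1`, so that these elements all lie in the irrelevant ideal. -/
noncomputable def monomialSucc (n : ℕ) (a : A) : kPlusX k A :=
  ⟨C a * X ^ (n + 1), by
    show _ ∈ (algebraMap k A).range
    simp [coeff_X_pow]⟩

@[simp] lemma coe_monomialSucc (n : ℕ) (a : A) :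
    (monomialSucc k n a : A[X]) = C a * X ^ (n + 1) :=
  rfl

lemma coeff_monomialSucc (n : ℕ) (a : A) (i : ℕ) :
    (monomialSucc k n a : A[X]).coeff i = if i = n + 1 then a else 0 := by
  simp [coeff_C_mul, coeff_X_pow]

@[simp] lemma monomialSucc_zero (n : ℕ) : monomialSucc k n (0 : A) = 0 :=
  Subtype.ext (by simp)

lemma monomialSucc_add (n : ℕ) (a b : A) :
    monomialSucc k n (a + b) = monomialSucc k n a + monomialSucc k n b :=
  Subtype.ext (by simp [add_mul])

lemma monomialSucc_mul_monomialSucc (n m : ℕ) (a b : A) :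
    monomialSucc k n a * monomialSucc k m b = monomialSucc k (n + m + 1) (a * b) :=
  Subtype.ext (by simp only [Subring.coe_mul, coe_monomialSucc, C_mul]; ring)

lemma monomialSucc_comm (n m : ℕ) (a : A) :
    monomialSucc k n a * monomialSucc k m 1 = monomialSucc k m a * monomialSucc k n 1 := by
  rw [monomialSucc_mul_monomialSucc, monomialSucc_mul_monomialSucc, Nat.add_comm n m]

lemma monomialSucc_one_pow (n : ℕ) :
    monomialSucc k 0 (1 : A) ^ (n + 1) = monomialSucc k n 1 :=
  Subtype.ext (by simp)

lemma eq_sum_monomialSucc_of_mem_mIdeal {f : kPlusX k A} (hf : f ∈ mIdeal k A) :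
    f = ∑ i ∈ Finset.range (f : A[X]).natDegree, monomialSucc k i ((f : A[X]).coeff (i + 1)) := by
  apply Subtype.ext
  conv_lhs => rw [as_sum_range_C_mul_X_pow (f : A[X]), Finset.sum_range_succ', mem_mIdeal.1 hf]
  simp

lemma mem_of_forall_monomialSucc_mem {I : Ideal (kPlusX k A)} {f : kPlusX k A}
    (hf : f ∈ mIdeal k A) (h : ∀ n, monomialSucc k n ((f : A[X]).coeff (n + 1)) ∈ I) : f ∈ I := by
  rw [eq_sum_monomialSucc_of_mem_mIdeal hf]
  exact I.sum_mem fun n _ => h n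

lemma monomialSucc_mem_of_isHomog {I : Ideal (kPlusX k A)} (hI : IsHomog I) {f : kPlusX k A}
    (hf : f ∈ I) (n : ℕ) : monomialSucc k n ((f : A[X]).coeff (n + 1)) ∈ I :=
  hI f hf (n + 1) _ rfl

lemma monomialSucc_mem_Pideal_iff {I : Ideal A} {n : ℕ} {a : A} :
    monomialSucc k n a ∈ Pideal k A I ↔ a ∈ I := by
  refine ⟨fun h => by simpa using h.2 (n + 1) (by omega), fun h => ?_⟩
  refine ⟨by simp, fun i _ => ?_⟩
  rw [coeff_monomialSucc]
  split_ifs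
  exacts [h, I.zero_mem]

lemma isHomog_Pideal (I : Ideal A) : IsHomog (Pideal k A I) := by
  rintro f hf (_ | i) g hg
  · simp [mem_Pideal, hg, hf.1]
  · rw [show g = monomialSucc k i _ from Subtype.ext hg]
    exact monomialSucc_mem_Pideal_iff.2 (hf.2 (i + 1) (by omega))

lemma Pideal_le_Pideal_iff {I J : Ideal A} : Pideal k A I ≤ Pideal k A J ↔ I ≤ J := by
  refine ⟨fun h a ha => ?_, fun h f hf => ⟨hf.1, fun i hi => h (hf.2 i hi)⟩⟩
  exact monomialSucc_mem_Pideal_iff.1 (h (monomialSucc_mem_Pideal_iff (n := 0).2 ha))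

lemma Pideal_injective : Function.Injective (Pideal k A) := fun _ _ h =>
  le_antisymm (Pideal_le_Pideal_iff.1 h.le) (Pideal_le_Pideal_iff.1 h.ge)

lemma Pideal_lt_mIdeal {I : Ideal A} (hI : I ≠ ⊤) : Pideal k A I < mIdeal k A := by
  refine lt_of_le_of_ne (fun f hf => hf.1) fun h => hI ((Ideal.eq_top_iff_one I).2 ?_)
  have hX : monomialSucc k 0 (1 : A) ∈ mIdeal k A := by simp [mem_mIdeal]
  exact monomialSucc_mem_Pideal_iff.1 (h ▸ hX)

/-- For a prime `Q ∌ X` this is `{a | a·X ∈ Q}` (`mem_coeffIdeal_iff`); saturating in the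
exponent makes it an ideal for every `Q`. -/
def coeffIdeal (Q : Ideal (kPlusX k A)) : Ideal A where
  carrier := {a | ∃ n, monomialSucc k n a ∈ Q}
  add_mem' := by
    rintro a b ⟨n, ha⟩ ⟨m, hb⟩
    have ha' : monomialSucc k (n + m + 1) a ∈ Q := by
      simpa [monomialSucc_mul_monomialSucc] using Q.mul_mem_right (monomialSucc k m 1) ha
    have hb' : monomialSucc k (n + m + 1) b ∈ Q := by
      simpa [monomialSucc_mul_monomialSucc, Nat.add_comm n m] using
        Q.mul_mem_right (monomialSucc k n 1) hb
    exact ⟨n + m + 1, monomialSucc_add (k := k) _ a b ▸ Q.add_mem ha' hb'⟩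
  zero_mem' := ⟨0, by simp⟩
  smul_mem' := by
    rintro r a ⟨n, ha⟩
    exact ⟨0 + n + 1, by
      simpa only [smul_eq_mul, monomialSucc_mul_monomialSucc] using
        Q.mul_mem_left (monomialSucc k 0 r) ha⟩

variable {Q : Ideal (kPlusX k A)}

lemma mIdeal_le_of_X_mem (hQ : Q.IsPrime) (hX : monomialSucc k 0 (1 : A) ∈ Q) : mIdeal k A ≤ Q := by
  have h₀ (a : A) : monomialSucc k 0 a ∈ Q := by
    refine hQ.mem_of_pow_mem 2 ?_
    have := Q.mul_mem_right (monomialSucc k 0 (a * a)) hX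
    rw [sq, monomialSucc_mul_monomialSucc]
    rwa [monomialSucc_mul_monomialSucc, one_mul] at this
  have h (n : ℕ) (a : A) : monomialSucc k n a ∈ Q := by
    cases n with
    | zero => exact h₀ a
    | succ n =>
      simpa [monomialSucc_mul_monomialSucc] using Q.mul_mem_left (monomialSucc k n 1) (h₀ a)
  exact fun f hf => mem_of_forall_monomialSucc_mem hf fun n => h n _

lemma monomialSucc_mem_of_mem (hQ : Q.IsPrime) (hX : monomialSucc k 0 (1 : A) ∉ Q) {n : ℕ}
    {a : A} (ha : monomialSucc k n a ∈ Q) (m : ℕ) : monomialSucc k m a ∈ Q := by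
  have hXn : monomialSucc k n (1 : A) ∉ Q := fun h =>
    hX (hQ.mem_of_pow_mem (n + 1) (by rwa [monomialSucc_one_pow]))
  have := Q.mul_mem_right (monomialSucc k m 1) ha
  rw [monomialSucc_comm] at this
  exact (hQ.mem_or_mem this).resolve_right hXn

lemma mem_coeffIdeal_iff (hQ : Q.IsPrime) (hX : monomialSucc k 0 (1 : A) ∉ Q) (n : ℕ) {a : A} :
    a ∈ coeffIdeal Q ↔ monomialSucc k n a ∈ Q :=
  ⟨fun ⟨_, ha⟩ => monomialSucc_mem_of_mem hQ hX ha n, fun ha => ⟨n, ha⟩⟩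

lemma coeffIdeal_isPrime (hQ : Q.IsPrime) (hX : monomialSucc k 0 (1 : A) ∉ Q) :
    (coeffIdeal Q).IsPrime := by
  refine ⟨fun h => hX ((mem_coeffIdeal_iff hQ hX 0).1 (h ▸ Submodule.mem_top)), ?_⟩
  intro a b hab
  rw [mem_coeffIdeal_iff hQ hX 1, ← monomialSucc_mul_monomialSucc 0 0] at hab
  simpa only [mem_coeffIdeal_iff hQ hX 0] using hQ.mem_or_mem hab

lemma eq_Pideal_coeffIdeal (hQ : Q.IsPrime) (hX : monomialSucc k 0 (1 : A) ∉ Q)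
    (hhom : IsHomog Q) (hle : Q ≤ mIdeal k A) :
    Q = Pideal k A (coeffIdeal Q) := by
  apply le_antisymm
  · refine fun f hf => ⟨hle hf, fun i hi => ?_⟩
    obtain ⟨n, rfl⟩ : ∃ n, i = n + 1 := ⟨i - 1, by omega⟩
    exact (mem_coeffIdeal_iff hQ hX n).2 (monomialSucc_mem_of_isHomog hhom hf n)
  · exact fun f hf => mem_of_forall_monomialSucc_mem hf.1 fun n =>
      (mem_coeffIdeal_iff hQ hX n).1 (hf.2 (n + 1) (by omega))

end CommRing

section Field

variable {k A : Type*} [Field k] [CommRing A] [Algebra k A]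

lemma Pideal_eq_comap_map_C {I : Ideal A} (hI : I ≠ ⊤) :
    Pideal k A I = (I.map C).comap (kPlusX k A).subtype := by
  ext f
  rw [Ideal.mem_comap, Ideal.mem_map_C_iff, mem_Pideal]
  refine ⟨fun h i => ?_, fun h => ⟨?_, fun i _ => h i⟩⟩
  · rcases i with _ | i
    exacts [h.1 ▸ I.zero_mem, h.2 _ (by omega)]
  · obtain ⟨x, hx⟩ := f.2
    simp [← hx, eq_zero_of_map_mem_of_ne_top (algebraMap k A) hI (hx ▸ h 0)]

lemma Pideal_isPrime (I : Ideal A) [hI : I.IsPrime] : (Pideal k A I).IsPrime := by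
  rw [Pideal_eq_comap_map_C hI.ne_top]
  have := Ideal.isPrime_map_C_of_isPrime (P := I)
  exact Ideal.IsPrime.comap _

lemma le_mIdeal_of_isHomog {I : Ideal (kPlusX k A)} (hhom : IsHomog I) (hI : I ≠ ⊤) :
    I ≤ mIdeal k A := by
  intro f hf
  obtain ⟨x, hx⟩ := f.2
  have hxI : constHom A x ∈ I := hhom f hf 0 _ (by simp [hx])
  simp [mem_mIdeal, ← hx, eq_zero_of_map_mem_of_ne_top _ hI hxI]

end Field

end kPlusX

theorem spec_equiv_proj_general (k A : Type*) [Field k] [CommRing A] [Algebra k A] :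
    (∀ 𝔭 : Ideal A, 𝔭.IsPrime →
        (Pideal k A 𝔭).IsPrime ∧ IsHomog (Pideal k A 𝔭) ∧ Pideal k A 𝔭 < mIdeal k A) ∧
      (∀ 𝔭 𝔮 : Ideal A, 𝔭.IsPrime → 𝔮.IsPrime →
        (𝔭 ≤ 𝔮 ↔ Pideal k A 𝔭 ≤ Pideal k A 𝔮)) ∧
      (∀ 𝔭 𝔮 : Ideal A, 𝔭.IsPrime → 𝔮.IsPrime →
        Pideal k A 𝔭 = Pideal k A 𝔮 → 𝔭 = 𝔮) ∧
      (∀ Q : Ideal (kPlusX k A), Q.IsPrime → IsHomog Q → Q ≠ mIdeal k A →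
        ∃ 𝔭 : Ideal A, 𝔭.IsPrime ∧ Q = Pideal k A 𝔭) := by
  refine ⟨fun 𝔭 h𝔭 => ⟨kPlusX.Pideal_isPrime 𝔭, kPlusX.isHomog_Pideal 𝔭,
      kPlusX.Pideal_lt_mIdeal h𝔭.ne_top⟩,
    fun _ _ _ _ => kPlusX.Pideal_le_Pideal_iff.symm,
    fun _ _ _ _ h => kPlusX.Pideal_injective h, ?_⟩
  intro Q hQ hhom hne
  have hle := kPlusX.le_mIdeal_of_isHomog hhom hQ.ne_top
  have hX : kPlusX.monomialSucc k 0 (1 : A) ∉ Q := fun hX =>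
    hne (le_antisymm hle (kPlusX.mIdeal_le_of_X_mem hQ hX))
  exact ⟨kPlusX.coeffIdeal Q, kPlusX.coeffIdeal_isPrime hQ hX,
    kPlusX.eq_Pideal_coeffIdeal hQ hX hhom hle⟩

/-- for a domain `A` containing a field `k` and the graded ring
`R = k + X·A[X]` with irrelevant ideal `𝔪 = X·A[X]`, the assignment `𝔭 ↦ P_𝔭` is an
inclusion-preserving and inclusion-reflecting bijection from `Spec A` onto the set of
homogeneous prime ideals of `R` different from `𝔪`; in particular each `P_𝔭` is a
homogeneous prime ideal strictly contained in `𝔪`. -/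
theorem spec_equiv_proj (k A : Type*) [Field k] [CommRing A] [IsDomain A] [Algebra k A] :
    (∀ 𝔭 : Ideal A, 𝔭.IsPrime →
        (Pideal k A 𝔭).IsPrime ∧ IsHomog (Pideal k A 𝔭) ∧ Pideal k A 𝔭 < mIdeal k A) ∧
      (∀ 𝔭 𝔮 : Ideal A, 𝔭.IsPrime → 𝔮.IsPrime →
        (𝔭 ≤ 𝔮 ↔ Pideal k A 𝔭 ≤ Pideal k A 𝔮)) ∧
      (∀ 𝔭 𝔮 : Ideal A, 𝔭.IsPrime → 𝔮.IsPrime →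
        Pideal k A 𝔭 = Pideal k A 𝔮 → 𝔭 = 𝔮) ∧
      (∀ Q : Ideal (kPlusX k A), Q.IsPrime → IsHomog Q → Q ≠ mIdeal k A →
        ∃ 𝔭 : Ideal A, 𝔭.IsPrime ∧ Q = Pideal k A 𝔭) :=
  spec_equiv_proj_general k A
end

section
/- Let k be a field and A a commutative integral domain that is a k-algebra, and let R = k + X·A[X] be the subring of A[X] consisting of polynomials with constant term in (the image of) k, graded by R₀ = k·1 and R_n = A·Xⁿ for n ≥ 1. Then the graded Krull dimension of R equals the Krull dimension of A plus one: the supremum of lengths of strictly increasing chains of homogeneous prime ideals of R equals ringKrullDim A + 1 (in WithBot ℕ∞). -/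
set_option maxHeartbeats 1000000
set_option synthInstance.maxHeartbeats 400000

/-!
The homogeneous primes of `R = k + X·A[X]` not containing `X` are exactly the contractions
`q[X] ∩ R` of the primes `q` of `A`, with `q` recovered as `{a | a X ∈ P}`: a homogeneous prime
avoiding `X` contains `a Xⁿ⁺¹ = (a X) Xⁿ` iff it contains `a X`. The only homogeneous prime
containing `X` is the irrelevant ideal `X·A[X] ∩ R`, and it contains every proper homogeneous
ideal because the nonzero elements of `R₀ = k` are units. Hence the homogeneous primes form the
poset `Spec A` with a top element adjoined, whose Krull dimension is `dim A + 1`.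
-/

open Polynomial

namespace KPlusX

variable {k A : Type*} [CommRing A]

section CommRing

variable [CommRing k] [Algebra k A]

theorem mem_kPlusX {f : A[X]} : f ∈ kPlusX k A ↔ f.coeff 0 ∈ (algebraMap k A).range :=
  Iff.rfl

variable (k) in
noncomputable def monomialOne : A →+ kPlusX k A :=
  (monomial 1 : A →ₗ[A] A[X]).toAddMonoidHom.codRestrict (kPlusX k A) fun _ => by
    simp [mem_kPlusX]

@[simp]
theorem coe_monomialOne (a : A) : (monomialOne k a : A[X]) = C a * X :=
  C_mul_X_eq_monomial.symm

noncomputable def homogeneousComponent (f : kPlusX k A) (i : ℕ) : kPlusX k A :=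
  ⟨C ((f : A[X]).coeff i) * X ^ i, by
    rcases i with _ | i
    · simpa only [pow_zero, mul_one, mem_kPlusX, coeff_C_zero] using f.2
    · simp [mem_kPlusX, coeff_X_pow]⟩

@[simp]
theorem coe_homogeneousComponent (f : kPlusX k A) (i : ℕ) :
    (homogeneousComponent f i : A[X]) = C ((f : A[X]).coeff i) * X ^ i :=
  rfl

theorem homogeneousComponent_succ (f : kPlusX k A) (n : ℕ) :
    homogeneousComponent f (n + 1) =
      monomialOne k ((f : A[X]).coeff (n + 1)) * monomialOne k 1 ^ n :=
  Subtype.ext <| by simp; ring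

theorem sum_homogeneousComponent (f : kPlusX k A) :
    ∑ i ∈ Finset.range ((f : A[X]).natDegree + 1), homogeneousComponent f i = f := by
  ext1
  simp only [AddSubmonoidClass.coe_finsetSum, coe_homogeneousComponent, C_mul_X_pow_eq_monomial]
  exact (f : A[X]).as_sum_range.symm

theorem homogeneousComponent_mem {P : Ideal (kPlusX k A)} (hP : IsHomog P)
    {f : kPlusX k A} (hf : f ∈ P) (i : ℕ) : homogeneousComponent f i ∈ P :=
  hP f hf i _ rfl

theorem mem_of_homogeneousComponent_succ_mem {P : Ideal (kPlusX k A)} {f : kPlusX k A}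
    (h0 : (f : A[X]).coeff 0 = 0) (h : ∀ n, homogeneousComponent f (n + 1) ∈ P) : f ∈ P := by
  rw [← sum_homogeneousComponent f]
  refine Ideal.sum_mem _ fun i _ => ?_
  rcases i with _ | n
  · convert P.zero_mem
    ext1
    simp [h0]
  · exact h n

noncomputable def irrelevant : Ideal (kPlusX k A) :=
  RingHom.ker (constantCoeff.comp (kPlusX k A).subtype)

theorem mem_irrelevant {f : kPlusX k A} : f ∈ irrelevant ↔ (f : A[X]).coeff 0 = 0 :=
  RingHom.mem_ker

theorem isPrime_irrelevant [IsDomain A] : (irrelevant : Ideal (kPlusX k A)).IsPrime :=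
  RingHom.ker_isPrime _

theorem isHomog_irrelevant : IsHomog (irrelevant : Ideal (kPlusX k A)) := by
  intro f hf i g hg
  rw [mem_irrelevant] at hf ⊢
  rcases i with _ | i <;> simp [hg, hf, coeff_X_pow]

noncomputable def ofIdeal (q : Ideal A) : Ideal (kPlusX k A) :=
  (q.map C).comap (kPlusX k A).subtype

theorem mem_ofIdeal {q : Ideal A} {f : kPlusX k A} :
    f ∈ ofIdeal q ↔ ∀ i, (f : A[X]).coeff i ∈ q :=
  Ideal.mem_map_C_iff

theorem isPrime_ofIdeal {q : Ideal A} (hq : q.IsPrime) :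
    (ofIdeal q : Ideal (kPlusX k A)).IsPrime :=
  have := (Ideal.isPrime_map_C_iff_isPrime q).mpr hq
  Ideal.IsPrime.comap _

theorem isHomog_ofIdeal (q : Ideal A) : IsHomog (ofIdeal q : Ideal (kPlusX k A)) := by
  intro f hf i g hg
  refine mem_ofIdeal.mpr fun j => ?_
  rw [hg, coeff_C_mul_X_pow]
  split_ifs
  · exact mem_ofIdeal.mp hf i
  · exact q.zero_mem

theorem monomialOne_mem_ofIdeal {q : Ideal A} {a : A} :
    monomialOne k a ∈ ofIdeal q ↔ a ∈ q := by
  simp only [mem_ofIdeal, coe_monomialOne, coeff_C_mul_X]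
  refine ⟨fun h => by simpa using h 1, fun ha i => ?_⟩
  split_ifs
  · exact ha
  · exact q.zero_mem

theorem ofIdeal_le_ofIdeal {q q' : Ideal A} :
    (ofIdeal q : Ideal (kPlusX k A)) ≤ ofIdeal q' ↔ q ≤ q' :=
  ⟨fun h _ ha => monomialOne_mem_ofIdeal.mp (h (monomialOne_mem_ofIdeal.mpr ha)),
    fun h _ hf => mem_ofIdeal.mpr fun i => h (mem_ofIdeal.mp hf i)⟩

theorem not_irrelevant_le_ofIdeal {q : Ideal A} (hq : q ≠ ⊤) :
    ¬ irrelevant ≤ (ofIdeal q : Ideal (kPlusX k A)) := fun h =>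
  hq <| (Ideal.eq_top_iff_one q).mpr <|
    monomialOne_mem_ofIdeal.mp (h (mem_irrelevant.mpr (by simp)))

noncomputable def degOneIdeal (P : Ideal (kPlusX k A)) (hP : P.IsPrime) : Ideal A :=
  { P.toAddSubmonoid.comap (monomialOne k) with
    smul_mem' := fun b a ha => hP.mem_of_pow_mem 2 <| by
      -- `b` need not lie in `R`; instead `(b a X)² = (a X) (b² a X)` and `P` is prime
      have : monomialOne k (b • a) ^ 2 = monomialOne k a * monomialOne k (b ^ 2 * a) :=
        Subtype.ext <| by simp; ring
      exact this ▸ P.mul_mem_right _ ha }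

theorem mem_degOneIdeal {P : Ideal (kPlusX k A)} {hP : P.IsPrime} {a : A} :
    a ∈ degOneIdeal P hP ↔ monomialOne k a ∈ P :=
  Iff.rfl

theorem isPrime_degOneIdeal {P : Ideal (kPlusX k A)} (hP : P.IsPrime)
    (hX : monomialOne k 1 ∉ P) : (degOneIdeal P hP).IsPrime := by
  refine Ideal.isPrime_iff.mpr ⟨fun h => hX (mem_degOneIdeal.mp (h ▸ Submodule.mem_top)),
    fun {a b} hab => ?_⟩
  have : monomialOne k a * monomialOne k b = monomialOne k (a * b) * monomialOne k 1 :=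
    Subtype.ext <| by simp; ring
  exact hP.mem_or_mem (this ▸ P.mul_mem_right _ (mem_degOneIdeal.mp hab))

variable (k A) in
abbrev HomogeneousPrimes : Type _ := {I : Ideal (kPlusX k A) // I.IsPrime ∧ IsHomog I}

end CommRing

section Field

variable [Field k] [Algebra k A]

variable (k A) in
noncomputable def constants : k →+* kPlusX k A :=
  (algebraMap k A[X]).codRestrict (kPlusX k A) fun _ => by simp [mem_kPlusX]

theorem le_irrelevant_of_isHomog {P : Ideal (kPlusX k A)} (hP : IsHomog P) (hne : P ≠ ⊤) :
    P ≤ irrelevant := by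
  intro f hf
  obtain ⟨c, hc⟩ := f.2
  have hcP : constants k A c ∈ P := by
    convert homogeneousComponent_mem hP hf 0
    ext1
    simp [constants, ← hc]
  obtain rfl : c = 0 := by
    by_contra h
    exact hne (P.eq_top_of_isUnit_mem hcP ((isUnit_iff_ne_zero.mpr h).map _))
  simpa [mem_irrelevant] using hc.symm

theorem ofIdeal_le_irrelevant {q : Ideal A} (hq : q.IsPrime) :
    (ofIdeal q : Ideal (kPlusX k A)) ≤ irrelevant :=
  le_irrelevant_of_isHomog (isHomog_ofIdeal q) (isPrime_ofIdeal hq).ne_top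

theorem eq_irrelevant_of_monomialOne_one_mem {P : Ideal (kPlusX k A)} (hP : P.IsPrime)
    (hhom : IsHomog P) (hX : monomialOne k 1 ∈ P) : P = irrelevant := by
  refine le_antisymm (le_irrelevant_of_isHomog hhom hP.ne_top) fun f hf =>
    mem_of_homogeneousComponent_succ_mem (mem_irrelevant.mp hf) fun n => hP.mem_of_pow_mem 2 ?_
  have : homogeneousComponent f (n + 1) ^ 2 =
      monomialOne k ((f : A[X]).coeff (n + 1) ^ 2) * monomialOne k 1 ^ (2 * n + 1) :=
    Subtype.ext <| by simp; ring
  exact this ▸ P.mul_mem_left _ (P.pow_mem_of_mem hX _ (by omega))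

theorem eq_ofIdeal_degOneIdeal {P : Ideal (kPlusX k A)} (hP : P.IsPrime) (hhom : IsHomog P)
    (hX : monomialOne k 1 ∉ P) : P = ofIdeal (degOneIdeal P hP) := by
  have hXn (n : ℕ) : monomialOne k 1 ^ n ∉ P := fun h => hX (hP.mem_of_pow_mem n h)
  refine le_antisymm (fun f hf => mem_ofIdeal.mpr fun i => ?_) fun f hf => ?_
  · rcases i with _ | n
    · rw [mem_irrelevant.mp (le_irrelevant_of_isHomog hhom hP.ne_top hf)]
      exact zero_mem _
    · have := homogeneousComponent_mem hhom hf (n + 1)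
      rw [homogeneousComponent_succ] at this
      exact (hP.mem_or_mem this).resolve_right (hXn n)
  · have hf0 := mem_irrelevant.mp (ofIdeal_le_irrelevant (isPrime_degOneIdeal hP hX) hf)
    refine mem_of_homogeneousComponent_succ_mem hf0 fun n => ?_
    rw [homogeneousComponent_succ]
    exact P.mul_mem_right _ (mem_ofIdeal.mp hf (n + 1))

variable [IsDomain A]

variable (k A) in
noncomputable def withTopPrimeSpectrumEmbedding :
    WithTop (PrimeSpectrum A) ↪o HomogeneousPrimes k A :=
  OrderEmbedding.ofMapLEIff
    (WithTop.recTopCoe ⟨irrelevant, isPrime_irrelevant, isHomog_irrelevant⟩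
      fun p => ⟨ofIdeal p.asIdeal, isPrime_ofIdeal p.2, isHomog_ofIdeal _⟩) <| by
    intro a b
    induction a using WithTop.recTopCoe <;> induction b using WithTop.recTopCoe
    · simp
    · simpa using not_irrelevant_le_ofIdeal (Ideal.IsPrime.ne_top inferInstance)
    · simpa using ofIdeal_le_irrelevant inferInstance
    · simp [ofIdeal_le_ofIdeal]

theorem withTopPrimeSpectrumEmbedding_surjective :
    Function.Surjective (withTopPrimeSpectrumEmbedding k A) := by
  rintro ⟨P, hP, hhom⟩
  by_cases hX : monomialOne k 1 ∈ P
  · exact ⟨⊤, Subtype.ext (eq_irrelevant_of_monomialOne_one_mem hP hhom hX).symm⟩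
  · exact ⟨(⟨degOneIdeal P hP, isPrime_degOneIdeal hP hX⟩ : PrimeSpectrum A),
      Subtype.ext (eq_ofIdeal_degOneIdeal hP hhom hX).symm⟩

variable (k A) in
noncomputable def withTopPrimeSpectrumOrderIso :
    WithTop (PrimeSpectrum A) ≃o HomogeneousPrimes k A :=
  .ofSurjective _ withTopPrimeSpectrumEmbedding_surjective

end Field

end KPlusX

/-- for a domain `A` containing a field `k` and the graded ring
`R = k + X·A[X]`, the graded Krull dimension of `R` (the supremum of lengths of chains of
homogeneous prime ideals, i.e. the Krull dimension of the poset of homogeneous primes)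
equals `ringKrullDim A + 1`. -/
theorem gradedKrullDim_kPlusX (k A : Type*) [Field k] [CommRing A]
    [IsDomain A] [Algebra k A] :
    Order.krullDim {I : Ideal (kPlusX k A) // I.IsPrime ∧ IsHomog I} =
      ringKrullDim A + (1 : WithBot ℕ∞) := by
  rw [← Order.krullDim_eq_of_orderIso (KPlusX.withTopPrimeSpectrumOrderIso k A),
    Order.krullDim_WithTop]
  rfl
end

section
/- Let k be a field and A a commutative integral domain that is a k-algebra, and let R = k + X·A[X] be the subring of A[X] consisting of polynomials with constant term in (the image of) k. Then the Krull dimension of the polynomial ring A[X] is at most the Krull dimension of R: ringKrullDim (Polynomial A) ≤ ringKrullDim R. -/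
/-!
Jaffard's special chain argument: a chain of primes of `A[X]` ending at `P` can be replaced,
losing at most one step, by a chain ending at `𝔭[X]` with `𝔭 = P ∩ A`, because the primes of
`A[X]` over `𝔭` are those of `κ(𝔭)[X]`, a ring of dimension one. Since `X·A[X] ⊆ R`,
contraction to `R` is strictly monotone on primes avoiding `X`, so chains avoiding `X` descend to
`R` with their length. A chain ending at a prime `P ∋ X` is first replaced by one ending at
`𝔭[X] ∌ X`; the contracted chain is then extended by `P ∩ R`, which contains `X`.
-/

open Polynomial

namespace Polynomial

variable {A : Type*} [CommRing A]

noncomputable def primeMapC (p : PrimeSpectrum A) : PrimeSpectrum A[X] :=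
  ⟨p.asIdeal.map C, (Ideal.isPrime_map_C_iff_isPrime _).mpr p.isPrime⟩

lemma primeMapC_mono : Monotone (primeMapC (A := A)) :=
  fun _ _ h => Ideal.map_mono h

lemma krullDim_preimage_comap_C_le_one (p : PrimeSpectrum A) :
    Order.krullDim (PrimeSpectrum.comap (C : A →+* A[X]) ⁻¹' {p}) ≤ 1 := by
  rw [show C = algebraMap A A[X] from rfl, Order.krullDim_eq_of_orderIso
      (PrimeSpectrum.preimageOrderIsoFiber A A[X] p), ← ringKrullDim,
    ← ringKrullDim_eq_of_ringEquiv (polyEquivTensor A p.asIdeal.ResidueField).toRingEquiv]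
  exact_mod_cast Ring.krullDimLE_iff.mp inferInstance

lemma eq_primeMapC_of_lt {P Q : PrimeSpectrum A[X]} (hQP : Q < P)
    (hle : primeMapC (PrimeSpectrum.comap C P) ≤ Q) :
    Q = primeMapC (PrimeSpectrum.comap C P) := by
  set p := PrimeSpectrum.comap C P
  have hp : PrimeSpectrum.comap C (primeMapC p) = p :=
    le_antisymm (Ideal.comap_mono (hle.trans hQP.le)) Ideal.le_comap_map
  have hQ : PrimeSpectrum.comap C Q = p :=
    le_antisymm (Ideal.comap_mono hQP.le) (hp ▸ Ideal.comap_mono hle)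
  let F := PrimeSpectrum.comap C ⁻¹' {p}
  obtain hmin | hmax :=
    Order.krullDim_le_one_iff.mp (krullDim_preimage_comap_C_le_one p) (⟨Q, hQ⟩ : F)
  · exact le_antisymm (hmin (show (⟨_, hp⟩ : F) ≤ ⟨Q, hQ⟩ from hle)) hle
  · exact absurd (hmax (show (⟨Q, hQ⟩ : F) ≤ ⟨P, rfl⟩ from hQP.le)) hQP.not_ge

lemma X_notMem_primeMapC (p : PrimeSpectrum A) : X ∉ (primeMapC p).asIdeal := fun hX =>
  p.isPrime.ne_top <| (Ideal.eq_top_iff_one _).mpr <| by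
    simpa only [coeff_X_one] using Ideal.mem_map_C_iff.mp hX 1

lemma exists_ltSeries_last_eq_primeMapC (c : LTSeries (PrimeSpectrum A[X])) :
    ∃ d : LTSeries (PrimeSpectrum A[X]),
      d.last = primeMapC (PrimeSpectrum.comap C c.last) ∧ c.length ≤ d.length + 1 := by
  induction c using RelSeries.inductionOn' with
  | singleton P => exact ⟨RelSeries.singleton _ _, rfl, le_add_self⟩
  | snoc c P hQP ih =>
    obtain ⟨d, hd, hlen⟩ := ih
    by_cases hle : primeMapC (PrimeSpectrum.comap C P) ≤ c.last
    · exact ⟨c, (eq_primeMapC_of_lt hQP hle).trans (by simp), by simp⟩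
    · have hlt : d.last < primeMapC (PrimeSpectrum.comap C P) := by
        refine hd ▸ (primeMapC_mono (Ideal.comap_mono hQP.le)).lt_of_ne fun heq => hle ?_
        exact heq ▸ Ideal.map_comap_le
      exact ⟨d.snoc _ hlt, by simp, by simpa using hlen⟩

end Polynomial

namespace Subring

variable {T : Type*} [CommRing T] (S : Subring T) {s : T}

lemma comap_subtype_lt_comap_subtype_of_mul_mem (hs : ∀ t, s * t ∈ S) {P Q : Ideal T}
    [P.IsPrime] (hPQ : P < Q) (hsQ : s ∉ Q) : P.comap S.subtype < Q.comap S.subtype := by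
  obtain ⟨hle, t, htQ, htP⟩ := SetLike.lt_iff_le_and_exists.mp hPQ
  refine SetLike.lt_iff_le_and_exists.mpr
    ⟨Ideal.comap_mono hle, ⟨s * t, hs t⟩, Q.mul_mem_left s htQ, fun hst => ?_⟩
  exact (Ideal.IsPrime.mem_or_mem ‹_› hst).elim (fun h => hsQ (hle h)) htP

lemma exists_ltSeries_comap_subtype (hs : ∀ t, s * t ∈ S) (c : LTSeries (PrimeSpectrum T))
    (hc : s ∉ c.last.asIdeal) :
    ∃ e : LTSeries (PrimeSpectrum S),
      e.length = c.length ∧ e.last = PrimeSpectrum.comap S.subtype c.last :=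
  ⟨⟨c.length, fun i => PrimeSpectrum.comap S.subtype (c i), fun i =>
    comap_subtype_lt_comap_subtype_of_mul_mem S hs (c.step i)
      fun h => hc (c.monotone (Fin.le_last _) h)⟩, rfl, rfl⟩

end Subring

section kPlusX

variable {k A : Type*} [CommRing k] [CommRing A] [Algebra k A]

lemma X_mul_mem_kPlusX (f : A[X]) : X * f ∈ kPlusX k A := by
  show (X * f).coeff 0 ∈ (algebraMap k A).range
  rw [coeff_X_mul_zero]
  exact zero_mem _

lemma X_mem_kPlusX : (X : A[X]) ∈ kPlusX k A :=
  mul_one (X : A[X]) ▸ X_mul_mem_kPlusX 1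

end kPlusX

theorem krullDim_polynomial_le_krullDim_kPlusX_general (k A : Type*) [Field k] [CommRing A]
    [Algebra k A] :
    ringKrullDim (Polynomial A) ≤ ringKrullDim (kPlusX k A) := by
  refine iSup_le fun c => ?_
  obtain ⟨e, hce⟩ : ∃ e : LTSeries (PrimeSpectrum (kPlusX k A)), c.length ≤ e.length := by
    by_cases hX : X ∈ c.last.asIdeal
    · obtain ⟨d, hd, hcd⟩ := exists_ltSeries_last_eq_primeMapC c
      obtain ⟨e, hde, he⟩ := (kPlusX k A).exists_ltSeries_comap_subtype X_mul_mem_kPlusX d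
        (hd ▸ X_notMem_primeMapC _)
      have hlt : e.last < PrimeSpectrum.comap (kPlusX k A).subtype c.last := by
        rw [he, hd, ← PrimeSpectrum.asIdeal_lt_asIdeal]
        exact SetLike.lt_iff_le_and_exists.mpr ⟨Ideal.comap_mono Ideal.map_comap_le,
          ⟨X, X_mem_kPlusX⟩, hX, X_notMem_primeMapC _⟩
      exact ⟨e.snoc _ hlt, by simpa [hde] using hcd⟩
    · obtain ⟨e, hce, -⟩ := (kPlusX k A).exists_ltSeries_comap_subtype X_mul_mem_kPlusX c hX
      exact ⟨e, hce.ge⟩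
  exact le_trans (by exact_mod_cast hce) (Order.LTSeries.length_le_krullDim e)

/-- for a domain `A` containing a field `k` and `R = k + X·A[X]`, the
Krull dimension of `A[X]` is at most the Krull dimension of `R`. -/
theorem krullDim_polynomial_le_krullDim_kPlusX (k A : Type*) [Field k] [CommRing A]
    [IsDomain A] [Algebra k A] :
    ringKrullDim (Polynomial A) ≤ ringKrullDim (kPlusX k A) :=
  krullDim_polynomial_le_krullDim_kPlusX_general k A
end
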